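/- arXiv:2406.09571 — 3 statements merged into one kernel-verified Lean document; each statement's English description precedes it below -/
import Mathlib

section
/- Let X be an a×b grid in P^3 with 2 ≤ a ≤ b, let ℓ_1,…,ℓ_{ab} be the linear forms dual to the points of X, and let 1 ≤ d ≤ a−1. Then the artinian algebra R/(ℓ_1^d,…,ℓ_{ab}^d) has the Weak Lefschetz Property. -/
/-- The linear form dual to a point of projective space with coordinate
vector `v`: `ℓ_v = v 0 • x_0 + ⋯ + v (n-1) • x_(n-1)`. -/
noncomputable def dualForm {n : ℕ} (k : Type) [Field k] (v : Fin n → k) :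
    MvPolynomial (Fin n) k :=
  ∑ i, MvPolynomial.C (v i) * MvPolynomial.X i

/-- `Λ_{X,d}`: the ideal generated by the `d`-th powers of the linear forms dual
to the points (given by coordinate vectors) in `X`. -/
noncomputable def powersIdeal {n : ℕ} (k : Type) [Field k]
    (X : Set (Fin n → k)) (d : ℕ) : Ideal (MvPolynomial (Fin n) k) :=
  Ideal.span ((fun v => dualForm k v ^ d) '' X)

/-- The degree-`t` graded component `[I]_t` of a homogeneous ideal, as a
`k`-subspace of the polynomial ring. -/
noncomputable def idealComp {n : ℕ} (k : Type) [Field k]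
    (I : Ideal (MvPolynomial (Fin n) k)) (t : ℕ) :
    Submodule k (MvPolynomial (Fin n) k) :=
  Submodule.restrictScalars k I ⊓ MvPolynomial.homogeneousSubmodule (Fin n) k t

/-- The degree-`t` graded component `[R/I]_t` of the quotient algebra, i.e. the image
of the space of degree-`t` homogeneous polynomials in the quotient. -/
noncomputable def quotComp {n : ℕ} (k : Type) [Field k]
    (I : Ideal (MvPolynomial (Fin n) k)) (t : ℕ) :
    Submodule k (MvPolynomial (Fin n) k ⧸ I) :=
  Submodule.map (Ideal.Quotient.mkₐ k I).toLinearMap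
    (MvPolynomial.homogeneousSubmodule (Fin n) k t)

/-- The image of the multiplication map `×ℓ : [R/I]_s → R/I`. -/
noncomputable def mulImage {n : ℕ} (k : Type) [Field k]
    (I : Ideal (MvPolynomial (Fin n) k)) (ℓ : MvPolynomial (Fin n) k) (s : ℕ) :
    Submodule k (MvPolynomial (Fin n) k ⧸ I) :=
  Submodule.map (LinearMap.mulLeft k (Ideal.Quotient.mk I ℓ)) (quotComp k I s)

/-- The multiplication map `×ℓ : [R/I]_s → [R/I]_t` has maximal rank: it is
injective or surjective. -/
def maxRankMulMap {n : ℕ} (k : Type) [Field k]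
    (I : Ideal (MvPolynomial (Fin n) k)) (ℓ : MvPolynomial (Fin n) k) (s t : ℕ) : Prop :=
  (∀ x ∈ quotComp k I s, Ideal.Quotient.mk I ℓ * x = 0 → x = 0) ∨
  (∀ y ∈ quotComp k I t, ∃ x ∈ quotComp k I s, Ideal.Quotient.mk I ℓ * x = y)

/-- The graded algebra `R/I` has the Weak Lefschetz Property: there is a linear form `ℓ`
such that every multiplication map `×ℓ : [R/I]_{t} → [R/I]_{t+1}` has maximal rank. -/
def hasWLP {n : ℕ} (k : Type) [Field k] (I : Ideal (MvPolynomial (Fin n) k)) : Prop :=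
  ∃ ℓ : MvPolynomial (Fin n) k, ℓ.IsHomogeneous 1 ∧
    ∀ t : ℕ, maxRankMulMap k I ℓ t (t + 1)

/-- The homogeneous vanishing ideal of a set `Y` of (coordinate vectors of) projective
points: all polynomials vanishing on the affine cone over `Y`. -/
noncomputable def vanishingIdealCone {n : ℕ} (k : Type) [Field k]
    (Y : Set (Fin n → k)) : Ideal (MvPolynomial (Fin n) k) where
  carrier := {h | ∀ v ∈ Y, ∀ c : k, MvPolynomial.eval (c • v) h = 0}
  zero_mem' := by intro v hv c; simp
  add_mem' := by intro f g hf hg v hv c; simp [hf v hv c, hg v hv c]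
  smul_mem' := by intro f h hh v hv c; simp [smul_eq_mul, hh v hv c]

/-- An `a × b` grid in `P³`: the `ab` pairwise intersection points of `a` lines
`λ_1, …, λ_a` in one ruling of a smooth quadric surface `Q ⊂ P³` with `b` lines
`μ_1, …, μ_b` in the other ruling.  Points of `P³` are recorded by coordinate
vectors in `k⁴`, and lines by `2`-dimensional subspaces of `k⁴` (their affine cones). -/
structure Grid (k : Type) [Field k] (a b : ℕ) where
  /-- the defining quadratic form of the smooth quadric -/
  Q : MvPolynomial (Fin 4) k
  homQ : Q.IsHomogeneous 2
  /-- the quadric is smooth: the partial derivatives have no common projective zero -/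
  smoothQ : ∀ v : Fin 4 → k, (∀ i, MvPolynomial.eval v (MvPolynomial.pderiv i Q) = 0) → v = 0
  /-- the lines of the first ruling -/
  lam : Fin a → Submodule k (Fin 4 → k)
  /-- the lines of the second ruling -/
  mu : Fin b → Submodule k (Fin 4 → k)
  lam_rank : ∀ i, Module.finrank k (lam i) = 2
  mu_rank : ∀ j, Module.finrank k (mu j) = 2
  lam_on : ∀ i, ∀ v ∈ lam i, MvPolynomial.eval v Q = 0
  mu_on : ∀ j, ∀ v ∈ mu j, MvPolynomial.eval v Q = 0
  /-- lines of the same ruling are pairwise disjoint -/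
  lam_disj : ∀ i i', i ≠ i' → lam i ⊓ lam i' = ⊥
  mu_disj : ∀ j j', j ≠ j' → mu j ⊓ mu j' = ⊥
  /-- lines of different rulings meet in exactly one point -/
  meet_rank : ∀ i j, Module.finrank k ↥(lam i ⊓ mu j) = 1
  /-- a coordinate vector for the grid point `P_{i,j} = λ_i ∩ μ_j` -/
  P : Fin a → Fin b → (Fin 4 → k)
  P_ne : ∀ i j, P i j ≠ 0
  P_mem : ∀ i j, P i j ∈ lam i ⊓ mu j

/-- The set of (coordinate vectors of) the points of a grid. -/
def Grid.pts {k : Type} [Field k] {a b : ℕ} (G : Grid k a b) : Set (Fin 4 → k) :=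
  Set.range fun p : Fin a × Fin b => G.P p.1 p.2

/-- The differential operator `∂^m = ∏ᵢ (∂/∂xᵢ)^(m i)` associated to a monomial
exponent vector `m`. -/
noncomputable def diffMonOp {n : ℕ} (k : Type) [Field k] (m : Fin n →₀ ℕ) :
    Module.End k (MvPolynomial (Fin n) k) :=
  (List.ofFn fun i : Fin n => ((MvPolynomial.pderiv i).toLinearMap ^ (m i))).prod

/-- `∂F/∂G`: the result of applying the differential operator
`G(∂/∂x_1, …, ∂/∂x_n)` to `F`. -/
noncomputable def diffOp {n : ℕ} (k : Type) [Field k]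
    (G F : MvPolynomial (Fin n) k) : MvPolynomial (Fin n) k :=
  ∑ m ∈ G.support, MvPolynomial.coeff m G • diffMonOp k m F

/-- Projection of `P³` to `P²` determined (in coordinates) by an invertible matrix `M`:
first move by `M`, then drop the last coordinate.  This is the projection from the point
with coordinate vector `M⁻¹ e₄` to the plane `{x₄ = 0}` (in the moved coordinates). -/
noncomputable def projPoint (k : Type) [Field k] (M : Matrix (Fin 4) (Fin 4) k)
    (v : Fin 4 → k) : Fin 3 → k :=
  fun i => M.mulVec v i.castSucc

/-- The image of a set of points of `P³` under the projection determined by `M`. -/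
noncomputable def projSet (k : Type) [Field k] (M : Matrix (Fin 4) (Fin 4) k)
    (X : Set (Fin 4 → k)) : Set (Fin 3 → k) :=
  projPoint k M '' X

/-- A set of points of `P²` is a complete intersection of type `(a,b)`: its homogeneous
vanishing ideal is generated by a form of degree `a` and a form of degree `b`. -/
def IsCIofType (k : Type) [Field k] (a b : ℕ) (Y : Set (Fin 3 → k)) : Prop :=
  ∃ f g : MvPolynomial (Fin 3) k, f.IsHomogeneous a ∧ g.IsHomogeneous b ∧
    vanishingIdealCone k Y = Ideal.span {f, g}

/-- `X ⊂ P³` is `(a,b)`-geproci: its projection from a general point to a general plane is a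
complete intersection of type `(a,b)`.  Genericity is expressed by a nonzero polynomial `F`
in the entries of the matrix `M` encoding the projection. -/
def IsGeproci (k : Type) [Field k] (a b : ℕ) (X : Set (Fin 4 → k)) : Prop :=
  ∃ F : MvPolynomial (Fin 4 × Fin 4) k, F ≠ 0 ∧
    ∀ M : Matrix (Fin 4) (Fin 4) k, IsUnit M.det →
      MvPolynomial.eval (fun p => M p.1 p.2) F ≠ 0 → IsCIofType k a b (projSet k M X)

/-- The irrelevant maximal ideal `(x_1, …, x_n)`. -/
noncomputable def irrelevantIdeal {n : ℕ} (k : Type) [Field k] :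
    Ideal (MvPolynomial (Fin n) k) :=
  Ideal.span (Set.range MvPolynomial.X)

/-- The saturation `J^sat` of a homogeneous ideal with respect to the irrelevant
maximal ideal. -/
noncomputable def satIdeal {n : ℕ} (k : Type) [Field k]
    (J : Ideal (MvPolynomial (Fin n) k)) : Ideal (MvPolynomial (Fin n) k) :=
  ⨆ m : ℕ, Submodule.colon J ((irrelevantIdeal k ^ m : Ideal (MvPolynomial (Fin n) k)) : Set (MvPolynomial (Fin n) k))

/-- The `d`-th symbolic power of the ideal of the (reduced) set of points of a grid:
the intersection of the `d`-th powers of the ideals of the individual points. -/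
noncomputable def Grid.symbolicPower {k : Type} [Field k] {a b : ℕ}
    (G : Grid k a b) (d : ℕ) : Ideal (MvPolynomial (Fin 4) k) :=
  ⨅ p : Fin a × Fin b, (vanishingIdealCone k {G.P p.1 p.2}) ^ d

/-!
Take `ℓ = ℓ_z` for a point `z` off the quadric. The ideal `Λ = (ℓ_P ^ d)` is generated in degree
`d`, so `×ℓ` is injective in degrees `< d`, while surjectivity in degrees `≥ d` reduces to
`R_d ⊆ Λ + (ℓ)`. In characteristic zero the powers `ℓ_v ^ d` span `R_d`, so by duality it suffices
that a functional `φ` killing `Λ` and `(ℓ)` kills every `ℓ_v ^ d`. The degree-`d` form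
`v ↦ φ (ℓ_v ^ d)` is invariant under `v ↦ v + s z`; it vanishes at the `b > d` grid points of each
line `λ_i`, hence on `λ_i`, hence on the planes `λ_i + ⟨z⟩`, which are `a > d` distinct planes, so
it vanishes identically.
-/

open MvPolynomial

attribute [local instance] MvPolynomial.gradedAlgebra

namespace MvPolynomial

variable {σ R : Type*} [CommSemiring R]

lemma mem_span_monomial_degree_eq_iff {f : MvPolynomial σ R} {d : ℕ} :
    f ∈ Ideal.span ((fun m => monomial m (1 : R)) '' {m | m.degree = d}) ↔
      ∀ m ∈ f.support, d ≤ m.degree := by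
  rw [mem_ideal_span_monomial_image]
  refine forall₂_congr fun m _ => ⟨?_, fun h => ?_⟩
  · rintro ⟨γ, rfl, hγm⟩
    exact Finsupp.degree_mono hγm
  · obtain ⟨γ, hγm, hγ⟩ := m.exists_le_degree_eq d h
    exact ⟨γ, hγ, hγm⟩

lemma IsHomogeneous.degree_eq_of_mem_support {f : MvPolynomial σ R} {e : ℕ}
    (hf : f.IsHomogeneous e) {m : σ →₀ ℕ} (hm : m ∈ f.support) : m.degree = e := by
  rw [Finsupp.degree_eq_weight_one]
  exact hf (mem_support_iff.mp hm)

lemma IsHomogeneous.mem_span_monomial_degree_eq {f : MvPolynomial σ R} {d e : ℕ}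
    (hf : f.IsHomogeneous e) (hde : d ≤ e) :
    f ∈ Ideal.span ((fun m => monomial m (1 : R)) '' {m | m.degree = d}) :=
  mem_span_monomial_degree_eq_iff.mpr fun _ hm => hf.degree_eq_of_mem_support hm ▸ hde

end MvPolynomial

section DualForm

variable {k : Type} [Field k] {n : ℕ}

lemma dualForm_add (v w : Fin n → k) : dualForm k (v + w) = dualForm k v + dualForm k w := by
  simp [dualForm, Finset.sum_add_distrib, add_mul]

lemma dualForm_smul (c : k) (v : Fin n → k) : dualForm k (c • v) = c • dualForm k v := by
  simp [dualForm, Finset.smul_sum, smul_eq_C_mul, mul_assoc]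

lemma dualForm_ne_zero {v : Fin n → k} (hv : v ≠ 0) : dualForm k v ≠ 0 := by
  contrapose! hv
  funext i
  simpa [dualForm, coeff_sum, coeff_C_mul, coeff_X, Finsupp.single_eq_single_iff] using
    congr_arg (coeff (Finsupp.single i 1)) hv

lemma isHomogeneous_dualForm (v : Fin n → k) : (dualForm k v).IsHomogeneous 1 :=
  IsHomogeneous.sum _ _ _ fun i _ => by
    simpa using (isHomogeneous_X k i).C_mul (v i)

lemma isHomogeneous_dualForm_pow (v : Fin n → k) (d : ℕ) :
    (dualForm k v ^ d).IsHomogeneous d := by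
  simpa using (isHomogeneous_dualForm v).pow d

lemma powersIdeal_le_span_monomial (X : Set (Fin n → k)) (d : ℕ) :
    powersIdeal k X d ≤ Ideal.span ((fun m => monomial m (1 : k)) '' {m | m.degree = d}) :=
  Ideal.span_le.mpr <| Set.image_subset_iff.mpr fun v _ =>
    (isHomogeneous_dualForm_pow v d).mem_span_monomial_degree_eq le_rfl

lemma eq_zero_of_mem_powersIdeal_of_isHomogeneous {X : Set (Fin n → k)} {d e : ℕ}
    {f : MvPolynomial (Fin n) k} (hf : f ∈ powersIdeal k X d) (hfe : f.IsHomogeneous e)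
    (hed : e < d) : f = 0 := by
  have hdeg := mem_span_monomial_degree_eq_iff.mp (powersIdeal_le_span_monomial X d hf)
  refine support_eq_empty.mp (Finset.eq_empty_of_forall_notMem fun m hm => ?_)
  have := hdeg m hm
  rw [hfe.degree_eq_of_mem_support hm] at this
  omega

lemma powersIdeal_isHomogeneous (X : Set (Fin n → k)) (d : ℕ) :
    (powersIdeal k X d).IsHomogeneous (homogeneousSubmodule (Fin n) k) :=
  Ideal.homogeneous_span _ _ <| Set.forall_mem_image.mpr fun v _ =>
    ⟨d, isHomogeneous_dualForm_pow v d⟩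

end DualForm

section WLP

variable {k : Type} [Field k] {n : ℕ}

lemma homogeneousComponent_mul_of_isHomogeneous_left {σ R : Type*} [CommSemiring R]
    {p : MvPolynomial σ R} {i : ℕ} (hp : p.IsHomogeneous i) (q : MvPolynomial σ R) (j : ℕ) :
    homogeneousComponent (i + j) (p * q) = p * homogeneousComponent j q := by
  have := DirectSum.coe_decompose_mul_of_left_mem_of_le (homogeneousSubmodule σ R)
    (b := q) (n := i + j) ((mem_homogeneousSubmodule i p).mpr hp) (Nat.le_add_right i j)
  rwa [Nat.add_sub_cancel_left, DirectSum.decompose, Equiv.coe_fn_mk,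
    decomposition.decompose'_apply, decomposition.decompose'_apply] at this

lemma quotComp_mul_injective {I : Ideal (MvPolynomial (Fin n) k)} {ℓ : MvPolynomial (Fin n) k}
    {t : ℕ} (hℓ : ℓ.IsHomogeneous 1) (hℓ0 : ℓ ≠ 0)
    (hI : ∀ f ∈ I, f.IsHomogeneous (t + 1) → f = 0) :
    ∀ x ∈ quotComp k I t, Ideal.Quotient.mk I ℓ * x = 0 → x = 0 := by
  rintro _ ⟨g, hg, rfl⟩ hmul
  change Ideal.Quotient.mk I ℓ * Ideal.Quotient.mk I g = 0 at hmul
  rw [← map_mul, Ideal.Quotient.eq_zero_iff_mem] at hmul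
  have hℓg : ℓ * g = 0 := hI _ hmul (by simpa [add_comm] using hℓ.mul hg)
  change Ideal.Quotient.mk I g = 0
  rw [(mul_eq_zero.mp hℓg).resolve_left hℓ0, map_zero]

lemma quotComp_mul_surjective {I : Ideal (MvPolynomial (Fin n) k)}
    (hI : I.IsHomogeneous (homogeneousSubmodule (Fin n) k)) {ℓ : MvPolynomial (Fin n) k}
    {t : ℕ} (hℓ : ℓ.IsHomogeneous 1)
    (h : ∀ f : MvPolynomial (Fin n) k, f.IsHomogeneous (t + 1) → f ∈ I ⊔ Ideal.span {ℓ}) :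
    ∀ y ∈ quotComp k I (t + 1), ∃ x ∈ quotComp k I t, Ideal.Quotient.mk I ℓ * x = y := by
  rintro _ ⟨f, hf, rfl⟩
  obtain ⟨f₁, hf₁, _, hr, hsum⟩ := Submodule.mem_sup.mp (h f hf)
  obtain ⟨r, rfl⟩ := Ideal.mem_span_singleton'.mp hr
  refine ⟨_, ⟨homogeneousComponent t r, homogeneousComponent_mem t r, rfl⟩, ?_⟩
  have hf_eq : f = homogeneousComponent (t + 1) f₁ + ℓ * homogeneousComponent t r := by
    rw [← homogeneousComponent_eq_self hf, ← hsum, map_add, add_comm t 1, mul_comm r,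
      homogeneousComponent_mul_of_isHomogeneous_left hℓ]
  change Ideal.Quotient.mk I ℓ * Ideal.Quotient.mk I _ = Ideal.Quotient.mk I f
  rw [← map_mul, Ideal.Quotient.mk_eq_mk_iff_sub_mem, hf_eq, sub_add_cancel_right]
  exact I.neg_mem (homogeneousComponent_mem_of_mem hI hf₁ _)

theorem hasWLP_powersIdeal_of_isHomogeneous_mem_sup {X : Set (Fin n → k)} {d : ℕ}
    {ℓ : MvPolynomial (Fin n) k} (hℓ : ℓ.IsHomogeneous 1) (hℓ0 : ℓ ≠ 0)
    (h : ∀ f : MvPolynomial (Fin n) k, f.IsHomogeneous d → f ∈ powersIdeal k X d ⊔ Ideal.span {ℓ}) :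
    hasWLP k (powersIdeal k X d) := by
  refine ⟨ℓ, hℓ, fun t => ?_⟩
  rcases lt_or_ge (t + 1) d with ht | ht
  · exact Or.inl <| quotComp_mul_injective hℓ hℓ0 fun f hf hft =>
      eq_zero_of_mem_powersIdeal_of_isHomogeneous hf hft ht
  · refine Or.inr <| quotComp_mul_surjective (powersIdeal_isHomogeneous X d) hℓ fun f hf => ?_
    refine Ideal.span_le.mpr ?_ (hf.mem_span_monomial_degree_eq ht)
    rintro _ ⟨m, hm, rfl⟩
    exact h _ (isHomogeneous_monomial _ hm)

end WLP

section PowersSpan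

variable {k : Type} [Field k] {n : ℕ}

lemma dualForm_pow_eq_sum (v : Fin n → k) (d : ℕ) :
    dualForm k v ^ d = ∑ κ ∈ Finset.univ.piAntidiag d,
      ((Nat.multinomial Finset.univ κ : k) * ∏ i, v i ^ κ i) • ∏ i, X i ^ κ i := by
  rw [dualForm, Finset.sum_pow_eq_sum_piAntidiag]
  refine Finset.sum_congr rfl fun κ _ => ?_
  simp only [smul_eq_C_mul, mul_pow, Finset.prod_mul_distrib, map_mul, map_prod, map_pow,
    map_natCast]
  ring

lemma prod_X_pow_eq_monomial_equivFunOnFinite {R : Type*} [CommSemiring R] (κ : Fin n → ℕ) :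
    ∏ i, (X i : MvPolynomial (Fin n) R) ^ κ i = monomial (Finsupp.equivFunOnFinite.symm κ) 1 := by
  rw [← prod_X_pow_eq_monomial]
  exact (Finset.prod_subset (Finset.subset_univ _) fun i _ hi => by
    simpa using congr_arg (X i ^ ·) (Finsupp.notMem_support_iff.mp hi)).symm

lemma apply_monomial_eq_zero_of_forall_apply_dualForm_pow [CharZero k]
    (φ : MvPolynomial (Fin n) k →ₗ[k] k) {d : ℕ}
    (hφ : ∀ v, φ (dualForm k v ^ d) = 0) {m : Fin n →₀ ℕ} (hm : m.degree = d) :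
    φ (monomial m 1) = 0 := by
  -- `P` is `v ↦ φ (ℓ_v ^ d)` as a polynomial in `v`, with coefficients `multinomial κ • φ (X ^ κ)`.
  set P : MvPolynomial (Fin n) k := ∑ κ ∈ Finset.univ.piAntidiag d,
      C ((Nat.multinomial Finset.univ κ : k) * φ (∏ i, X i ^ κ i)) * ∏ i, X i ^ κ i
  have hP : P = 0 := funext fun v => by
    simp only [P, map_zero, ← hφ v, dualForm_pow_eq_sum, map_sum, map_mul, eval_C, map_prod,
      map_pow, eval_X, map_smul, smul_eq_mul]
    exact Finset.sum_congr rfl fun κ _ => by ring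
  have hcoeff := congr_arg (coeff m) hP
  simp only [P, prod_X_pow_eq_monomial_equivFunOnFinite, C_mul_monomial, mul_one, coeff_sum,
    coeff_monomial, Equiv.symm_apply_eq, coeff_zero] at hcoeff
  have hm' : Finsupp.equivFunOnFinite m ∈ Finset.univ.piAntidiag d := by
    rw [Finset.mem_piAntidiag, ← hm, Finsupp.degree_eq_sum]
    simp
  rw [Finset.sum_ite_eq', if_pos hm', Equiv.symm_apply_apply] at hcoeff
  exact (mul_eq_zero.mp hcoeff).resolve_left (Nat.cast_ne_zero.mpr (Nat.multinomial_pos _ _).ne')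

theorem span_range_dualForm_pow [CharZero k] (d : ℕ) :
    Submodule.span k (Set.range fun v : Fin n → k => dualForm k v ^ d) =
      homogeneousSubmodule (Fin n) k d := by
  refine le_antisymm (Submodule.span_le.mpr <| Set.range_subset_iff.mpr fun v =>
    isHomogeneous_dualForm_pow v d) fun f hf => ?_
  rw [f.as_sum]
  refine Submodule.sum_mem _ fun m hm => ?_
  rw [← mul_one (coeff m f), ← smul_eq_mul, ← smul_monomial]
  refine Submodule.smul_mem _ _ ?_
  by_contra h
  obtain ⟨φ, hφm, hφ⟩ := Submodule.exists_dual_map_eq_bot_of_notMem h inferInstance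
  rw [← LinearMap.le_ker_iff_map] at hφ
  exact hφm <| apply_monomial_eq_zero_of_forall_apply_dualForm_pow φ
    (fun v => hφ (Submodule.subset_span ⟨v, rfl⟩))
    (IsHomogeneous.degree_eq_of_mem_support hf hm)

end PowersSpan

section Forms

variable {k : Type} [Field k] {n : ℕ} (φ : MvPolynomial (Fin n) k →ₗ[k] k) (d : ℕ)

lemma apply_dualForm_smul_pow (c : k) (v : Fin n → k) :
    φ (dualForm k (c • v) ^ d) = c ^ d * φ (dualForm k v ^ d) := by
  rw [dualForm_smul, smul_pow, map_smul, smul_eq_mul]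

/-- `t ↦ φ (ℓ_{p + t q} ^ d)` as a polynomial in `t`, via the binomial expansion. -/
noncomputable def linePoly (p q : Fin n → k) : Polynomial k :=
  ∑ j ∈ Finset.range (d + 1),
    Polynomial.monomial j (d.choose j * φ (dualForm k p ^ (d - j) * dualForm k q ^ j))

lemma eval_linePoly (p q : Fin n → k) (t : k) :
    (linePoly φ d p q).eval t = φ (dualForm k (p + t • q) ^ d) := by
  rw [dualForm_add, dualForm_smul, add_comm, add_pow, map_sum, linePoly, Polynomial.eval_finsetSum]
  refine Finset.sum_congr rfl fun j _ => ?_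
  have : (t • dualForm k q) ^ j * dualForm k p ^ (d - j) * (d.choose j : MvPolynomial (Fin n) k)
      = (t ^ j * d.choose j) • (dualForm k p ^ (d - j) * dualForm k q ^ j) := by
    simp only [smul_eq_C_mul, mul_pow, map_mul, map_pow, map_natCast]
    ring
  rw [Polynomial.eval_monomial, this, map_smul, smul_eq_mul]
  ring

lemma natDegree_linePoly_le (p q : Fin n → k) : (linePoly φ d p q).natDegree ≤ d :=
  Polynomial.natDegree_sum_le_of_forall_le _ _ fun _ hj =>
    (Polynomial.natDegree_monomial_le _).trans (Finset.mem_range_succ_iff.mp hj)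

lemma coeff_linePoly_self (p q : Fin n → k) :
    (linePoly φ d p q).coeff d = φ (dualForm k q ^ d) := by
  rw [linePoly, Polynomial.finsetSum_coeff,
    Finset.sum_eq_single_of_mem d (Finset.self_mem_range_succ d) fun _ _ hj => by
      rw [Polynomial.coeff_monomial, if_neg hj]]
  simp

lemma apply_dualForm_add_smul_pow {z : Fin n → k} (hφ : ∀ g, φ (dualForm k z * g) = 0)
    (u : Fin n → k) (s : k) : φ (dualForm k (u + s • z) ^ d) = φ (dualForm k u ^ d) := by
  have hdvd : dualForm k z ∣ dualForm k (u + s • z) - dualForm k u := by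
    rw [dualForm_add, dualForm_smul, add_sub_cancel_left, smul_eq_C_mul]
    exact dvd_mul_left _ _
  obtain ⟨g, hg⟩ := hdvd.trans (sub_dvd_pow_sub_pow _ _ d)
  rw [← sub_eq_zero, ← map_sub, hg, hφ]

lemma apply_dualForm_pow_eq_zero_of_linePoly_eq_zero {p q : Fin n → k}
    (h : linePoly φ d p q = 0) {u : Fin n → k} (hu : u ∈ Submodule.span k {p, q}) :
    φ (dualForm k u ^ d) = 0 := by
  obtain ⟨a, b, rfl⟩ := Submodule.mem_span_pair.mp hu
  rcases eq_or_ne a 0 with rfl | ha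
  -- `u ∈ k q` is the point at infinity of the line `p + t q`, seen by the leading coefficient.
  · rw [zero_smul, zero_add, apply_dualForm_smul_pow, ← coeff_linePoly_self, h,
      Polynomial.coeff_zero, mul_zero]
  · rw [show a • p + b • q = a • (p + (b / a) • q) by
        rw [smul_add, smul_smul, mul_div_cancel₀ _ ha],
      apply_dualForm_smul_pow, ← eval_linePoly, h, Polynomial.eval_zero, mul_zero]

lemma linePoly_eq_zero_of_apply_eq_zero {ι : Type*} [Fintype ι] {v : ι → Fin n → k}
    {i₀ i₁ : ι} (hi : i₀ ≠ i₁) (hv : Pairwise fun i j => ∀ c : k, c • v i ≠ v j)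
    (hspan : ∀ i, v i ∈ Submodule.span k {v i₀, v i₁}) (hd : d < Fintype.card ι)
    (hφ : ∀ i, φ (dualForm k (v i) ^ d) = 0) :
    linePoly φ d (v i₀) (v i₁) = 0 := by
  classical
  choose s t hst using fun i => Submodule.mem_span_pair.mp (hspan i)
  have hs : ∀ i, i ≠ i₁ → s i ≠ 0 := fun i hi h0 =>
    hv (Ne.symm hi) (t i) (by rw [← hst i, h0, zero_smul, zero_add])
  have hv_eq : ∀ i, i ≠ i₁ → v i = s i • (v i₀ + (t i / s i) • v i₁) := fun i hi => by
    rw [smul_add, smul_smul, mul_div_cancel₀ _ (hs i hi), hst]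
  let r : {i // i ≠ i₁} → k := fun i => t i / s i
  have hr : Function.Injective r := by
    rintro ⟨i, hi⟩ ⟨j, hj⟩ hij
    by_contra hne
    refine hv (fun h => hne (Subtype.ext h)) (s j / s i) ?_
    rw [hv_eq i hi, hv_eq j hj, smul_smul, div_mul_cancel₀ _ (hs i hi)]
    exact congr_arg (fun c => s j • (v i₀ + c • v i₁)) hij
  have hroot : ∀ i, (linePoly φ d (v i₀) (v i₁)).eval (r i) = 0 := by
    rintro ⟨i, hi⟩
    have := hφ i
    rw [hv_eq i hi, apply_dualForm_smul_pow] at this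
    rw [eval_linePoly]
    exact (mul_eq_zero.mp this).resolve_left (pow_ne_zero _ (hs i hi))
  have hdeg : (linePoly φ d (v i₀) (v i₁)).natDegree ≤ d - 1 := by
    refine Polynomial.natDegree_le_iff_coeff_eq_zero.mpr fun N hN => ?_
    rcases (show N = d ∨ d < N by omega) with rfl | hN
    · rw [coeff_linePoly_self, hφ]
    · exact Polynomial.coeff_eq_zero_of_natDegree_lt ((natDegree_linePoly_le φ d _ _).trans_lt hN)
  have hcard : Fintype.card {i // i ≠ i₁} = Fintype.card ι - 1 := by
    rw [Fintype.card_subtype_compl, Fintype.card_subtype_eq]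
  have hι : 1 < Fintype.card ι := Fintype.one_lt_card_iff.mpr ⟨i₀, i₁, hi⟩
  exact Polynomial.eq_zero_of_natDegree_lt_card_of_eval_eq_zero _ hr hroot (by omega)

lemma apply_dualForm_pow_eq_zero_of_forall_mem_ker [Infinite k] {ι : Type*} [Fintype ι]
    {g : ι → Module.Dual k (Fin n → k)}
    (hg : Pairwise fun i j => LinearMap.ker (g i) ≠ LinearMap.ker (g j))
    (hd : d < Fintype.card ι) (hφ : ∀ i, ∀ u ∈ LinearMap.ker (g i), φ (dualForm k u ^ d) = 0)
    (v : Fin n → k) : φ (dualForm k v ^ d) = 0 := by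
  by_cases hv : ∃ i, g i v = 0
  · obtain ⟨i, hi⟩ := hv
    exact hφ i v hi
  push Not at hv
  -- A general line `w + t v` meets the hyperplanes at distinct parameters `t`.
  obtain ⟨w, hw⟩ := Module.Dual.exists_forall_ne_zero_of_forall_exists
    (fun p : {p : ι × ι // p.1 ≠ p.2} => g p.1.1 v • g p.1.2 - g p.1.2 v • g p.1.1) (by
      rintro ⟨⟨i, j⟩, hij⟩
      by_contra! h
      have hx : ∀ x, g i v * g j x = g j v * g i x := fun x => by
        simpa [sub_eq_zero] using h x
      refine hg hij (Submodule.ext fun x => ?_)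
      simp only [LinearMap.mem_ker]
      constructor <;> intro h0
      · simpa [h0, hv i] using hx x
      · simpa [h0, hv j] using (hx x).symm)
  let t : ι → k := fun i => -(g i w / g i v)
  have ht : Function.Injective t := fun i j hij => by
    by_contra hne
    refine hw ⟨(j, i), Ne.symm hne⟩ ?_
    simp only [t, neg_inj, div_eq_div_iff (hv i) (hv j)] at hij
    simp [hij, mul_comm]
  have hroot : ∀ i, (linePoly φ d w v).eval (t i) = 0 := fun i => by
    rw [eval_linePoly]
    refine hφ i _ ?_
    simp [t, div_mul_cancel₀ _ (hv i)]
  have hzero := Polynomial.eq_zero_of_natDegree_lt_card_of_eval_eq_zero _ ht hroot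
    ((natDegree_linePoly_le φ d w v).trans_lt hd)
  rw [← coeff_linePoly_self φ d w v, hzero, Polynomial.coeff_zero]

end Forms

lemma Submodule.exists_ker_eq_of_finrank_add_one {K V : Type*} [Field K] [AddCommGroup V]
    [Module K V] [FiniteDimensional K V] {W : Submodule K V}
    (hW : Module.finrank K W + 1 = Module.finrank K V) :
    ∃ f : Module.Dual K V, LinearMap.ker f = W := by
  have hWtop : W < ⊤ := lt_top_iff_ne_top.mpr fun h => by
    rw [h, finrank_top] at hW
    omega
  obtain ⟨f, hf, hWf⟩ := W.exists_dual_map_eq_bot_of_lt_top hWtop inferInstance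
  rw [← LinearMap.le_ker_iff_map] at hWf
  have hker := Submodule.finrank_lt (LinearMap.ker_eq_top.not.mpr hf)
  exact ⟨f, (Submodule.eq_of_le_of_finrank_le hWf (by omega)).symm⟩

namespace Grid

variable {k : Type} [Field k] {a b : ℕ} (G : Grid k a b)

lemma smul_P_ne (i : Fin a) {j j' : Fin b} (hjj' : j ≠ j') (c : k) : c • G.P i j ≠ G.P i j' := by
  intro h
  have hmem : G.P i j' ∈ G.mu j ⊓ G.mu j' :=
    ⟨h ▸ (G.mu j).smul_mem c (G.P_mem i j).2, (G.P_mem i j').2⟩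
  rw [G.mu_disj j j' hjj'] at hmem
  exact G.P_ne i j' hmem

lemma lam_eq_span_pair (i : Fin a) {j j' : Fin b} (hjj' : j ≠ j') :
    G.lam i = Submodule.span k {G.P i j, G.P i j'} := by
  have hli : LinearIndependent k ![G.P i j, G.P i j'] :=
    (LinearIndependent.pair_iff' (G.P_ne i j)).mpr (G.smul_P_ne i hjj')
  have hspan := finrank_span_eq_card hli
  rw [Matrix.range_cons_cons_empty, Fintype.card_fin] at hspan
  refine (Submodule.eq_of_le_of_finrank_le ?_ (by rw [hspan, G.lam_rank])).symm
  rw [Submodule.span_le, Set.insert_subset_iff, Set.singleton_subset_iff]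
  exact ⟨(G.P_mem i j).1, (G.P_mem i j').1⟩

lemma lam_sup_lam_eq_top {i i' : Fin a} (hii' : i ≠ i') : G.lam i ⊔ G.lam i' = ⊤ := by
  refine Submodule.eq_top_of_finrank_eq ?_
  have h := Submodule.finrank_sup_add_finrank_inf_eq (G.lam i) (G.lam i')
  rw [G.lam_disj i i' hii', G.lam_rank, G.lam_rank, finrank_bot] at h
  rw [Module.finrank_fin_fun]
  omega

lemma Q_ne_zero : G.Q ≠ 0 := fun h => by
  simpa using congr_fun (G.smoothQ 1 fun i => by rw [h, map_zero, map_zero]) 0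

lemma exists_eval_Q_ne_zero [Infinite k] : ∃ z, eval z G.Q ≠ 0 := by
  by_contra! h
  exact G.Q_ne_zero (MvPolynomial.funext fun z => by rw [h z, map_zero])

lemma ne_zero_of_eval_Q_ne_zero {z : Fin 4 → k} (hz : eval z G.Q ≠ 0) : z ≠ 0 := by
  rintro rfl
  exact hz (by rw [eval_zero, constantCoeff_eq, G.homQ.coeff_eq_zero (by simp)])

lemma finrank_lam_sup_span_singleton {z : Fin 4 → k} (hz : eval z G.Q ≠ 0) (i : Fin a) :
    Module.finrank k ↥(G.lam i ⊔ Submodule.span k {z}) + 1 = Module.finrank k (Fin 4 → k) := by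
  have hinf : G.lam i ⊓ Submodule.span k {z} = ⊥ := by
    refine (Submodule.disjoint_span_singleton' (G.ne_zero_of_eval_Q_ne_zero hz)).mpr ?_ |>.eq_bot
    exact fun h => hz (G.lam_on i z h)
  have h := Submodule.finrank_sup_add_finrank_inf_eq (G.lam i) (Submodule.span k {z})
  rw [hinf, G.lam_rank i, finrank_span_singleton (G.ne_zero_of_eval_Q_ne_zero hz), finrank_bot] at h
  rw [Module.finrank_fin_fun]
  omega

lemma lam_sup_span_singleton_injective {z : Fin 4 → k} (hz : eval z G.Q ≠ 0) :
    Function.Injective fun i => G.lam i ⊔ Submodule.span k {z} := by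
  intro i i' h
  by_contra hii'
  have hle : G.lam i ⊔ G.lam i' ≤ G.lam i ⊔ Submodule.span k {z} :=
    sup_le le_sup_left (le_sup_left.trans (le_of_eq h.symm))
  rw [G.lam_sup_lam_eq_top hii', top_le_iff] at hle
  have := G.finrank_lam_sup_span_singleton hz i
  rw [hle, finrank_top] at this
  omega

theorem apply_dualForm_pow_eq_zero [Infinite k] {z : Fin 4 → k} (hz : eval z G.Q ≠ 0) {d : ℕ}
    (hb : 2 ≤ b) (hdb : d < b) (hda : d < a) (φ : MvPolynomial (Fin 4) k →ₗ[k] k)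
    (hφz : ∀ g, φ (dualForm k z * g) = 0) (hφP : ∀ i j, φ (dualForm k (G.P i j) ^ d) = 0)
    (v : Fin 4 → k) : φ (dualForm k v ^ d) = 0 := by
  have hline : ∀ i, ∀ u ∈ G.lam i, φ (dualForm k u ^ d) = 0 := by
    intro i u hu
    have h01 : (⟨0, by omega⟩ : Fin b) ≠ ⟨1, by omega⟩ := by simp
    rw [G.lam_eq_span_pair i h01] at hu
    refine apply_dualForm_pow_eq_zero_of_linePoly_eq_zero φ d ?_ hu
    refine linePoly_eq_zero_of_apply_eq_zero φ d h01 (fun _ _ h => G.smul_P_ne i h)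
      (fun j => G.lam_eq_span_pair i h01 ▸ (G.P_mem i j).1) (by simpa) (hφP i)
  choose g hg using fun i => Submodule.exists_ker_eq_of_finrank_add_one
    (G.finrank_lam_sup_span_singleton hz i)
  refine apply_dualForm_pow_eq_zero_of_forall_mem_ker φ d (g := g)
    (fun i i' h => by simpa only [hg] using (G.lam_sup_span_singleton_injective hz).ne h)
    (by simpa) (fun i u hu => ?_) v
  rw [hg i] at hu
  obtain ⟨w, hw, _, hy, rfl⟩ := Submodule.mem_sup.mp hu
  obtain ⟨s, rfl⟩ := Submodule.mem_span_singleton.mp hy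
  rw [apply_dualForm_add_smul_pow φ d hφz]
  exact hline i w hw

theorem isHomogeneous_mem_powersIdeal_sup [CharZero k] {z : Fin 4 → k} (hz : eval z G.Q ≠ 0)
    {d : ℕ} (hb : 2 ≤ b) (hdb : d < b) (hda : d < a) {f : MvPolynomial (Fin 4) k}
    (hf : f.IsHomogeneous d) : f ∈ powersIdeal k G.pts d ⊔ Ideal.span {dualForm k z} := by
  rw [← mem_homogeneousSubmodule, ← span_range_dualForm_pow] at hf
  change f ∈ (powersIdeal k G.pts d ⊔ Ideal.span {dualForm k z}).restrictScalars k
  refine Submodule.span_le.mpr (Set.range_subset_iff.mpr fun v => ?_) hf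
  by_contra h
  obtain ⟨φ, hφv, hφ⟩ := Submodule.exists_dual_map_eq_bot_of_notMem h inferInstance
  rw [← LinearMap.le_ker_iff_map] at hφ
  refine hφv (G.apply_dualForm_pow_eq_zero hz hb hdb hda φ (fun g => hφ ?_) (fun i j => hφ ?_) v)
  · exact Ideal.mem_sup_right (Ideal.mem_span_singleton.mpr (dvd_mul_right _ _))
  · exact Ideal.mem_sup_left (Ideal.subset_span ⟨_, ⟨(i, j), rfl⟩, rfl⟩)

end Grid

theorem wlp_of_low_powers_general (k : Type) [Field k] [CharZero k]
    (a b : ℕ) (ha : 2 ≤ a) (hab : a ≤ b) (G : Grid k a b)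
    (d : ℕ) (hd2 : d ≤ a - 1) :
    hasWLP k (powersIdeal k G.pts d) := by
  obtain ⟨z, hz⟩ := G.exists_eval_Q_ne_zero
  exact hasWLP_powersIdeal_of_isHomogeneous_mem_sup (isHomogeneous_dualForm z)
    (dualForm_ne_zero (G.ne_zero_of_eval_Q_ne_zero hz))
    fun f hf => G.isHomogeneous_mem_powersIdeal_sup hz (by omega) (by omega) (by omega) hf

/-- Corollary 3.6: for an `a×b` grid with `2 ≤ a ≤ b` and `1 ≤ d ≤ a-1`, the algebra
`R/(ℓ_1^d, …, ℓ_{ab}^d)` has the Weak Lefschetz Property. -/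
theorem wlp_of_low_powers (k : Type) [Field k] [CharZero k] [IsAlgClosed k]
    (a b : ℕ) (ha : 2 ≤ a) (hab : a ≤ b) (G : Grid k a b)
    (d : ℕ) (hd1 : 1 ≤ d) (hd2 : d ≤ a - 1) :
    hasWLP k (powersIdeal k G.pts d) :=
  wlp_of_low_powers_general k a b ha hab G d hd2
end

section
/- Let X = {P_{i,j} : 1 ≤ i ≤ a, 1 ≤ j ≤ b} be an a×b grid in P^3 with a ≤ b, and let ℓ_{i,j} be the linear form dual to P_{i,j}. (a) If a−1 ≤ d ≤ b−1, then for every a×(d+1) subgrid Y of X there is an equality of ideals (ℓ_{i,j}^d : P_{i,j} ∈ X) = (ℓ_{i,j}^d : P_{i,j} ∈ Y). (b) If d ≤ a−1, then for every (d+1)×(d+1) subgrid Y of X there is an equality of ideals (ℓ_{i,j}^d : P_{i,j} ∈ X) = (ℓ_{i,j}^d : P_{i,j} ∈ Y). -/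
open Matrix in
private lemma vanderSolve {k : Type} [Field k] (d : ℕ) (hd : 1 ≤ d) (s t : Fin (d+1) → k)
    (hnp : ∀ r r', r ≠ r' → s r * t r' ≠ s r' * t r) (target : Fin (d+1) → k) :
    ∃ c : Fin (d+1) → k, ∀ i : Fin (d+1),
      ∑ r, c r * (s r ^ (i : ℕ) * t r ^ (d - (i : ℕ))) = target i := by
  classical
  set M : Matrix (Fin (d+1)) (Fin (d+1)) k :=
    Matrix.of fun i r => s r ^ (i:ℕ) * t r ^ (d - (i:ℕ)) with hM
  have hker : ∀ a : Fin (d+1) → k, Mᵀ.mulVec a = 0 → a = 0 := by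
    intro a ha
    have ha' : ∀ r, ∑ i : Fin (d+1), a i * (s r ^ (i:ℕ) * t r ^ (d - (i:ℕ))) = 0 := by
      intro r
      have h := congrFun ha r
      simp only [Matrix.mulVec, dotProduct, Matrix.transpose_apply, hM,
        Matrix.of_apply, Pi.zero_apply] at h
      rw [← h]
      exact Finset.sum_congr rfl fun i _ => by ring
    set g : Polynomial k := ∑ i : Fin (d+1), Polynomial.C (a i) * Polynomial.X ^ (i:ℕ) with hg
    have hcoeff : ∀ N : ℕ, g.coeff N = if h : N < d+1 then a ⟨N, h⟩ else 0 := by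
      intro N
      rw [hg, Polynomial.finset_sum_coeff]
      simp only [Polynomial.coeff_C_mul, Polynomial.coeff_X_pow]
      split
      · next h =>
        rw [Finset.sum_eq_single (⟨N, h⟩ : Fin (d+1))]
        · simp
        · intro i _ hne
          rw [if_neg, mul_zero]
          exact fun hc => hne (Fin.ext hc.symm)
        · simp
      · next h =>
        apply Finset.sum_eq_zero
        intro i _
        rw [if_neg, mul_zero]
        omega
    have hdeg : g.natDegree ≤ d := by
      rw [Polynomial.natDegree_le_iff_coeff_eq_zero]
      intro N hN
      rw [hcoeff, dif_neg (by omega)]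
    have hevalg : ∀ x : k, g.eval x = ∑ i : Fin (d+1), a i * x ^ (i:ℕ) := by
      intro x
      rw [hg, Polynomial.eval_finset_sum]
      simp
    have heval : ∀ r, t r ≠ 0 → g.eval (s r / t r) = 0 := by
      intro r hr
      have key : t r ^ d * g.eval (s r / t r) = 0 := by
        rw [hevalg, Finset.mul_sum, ← ha' r]
        refine Finset.sum_congr rfl fun i _ => ?_
        have hsplit : t r ^ d = t r ^ (i:ℕ) * t r ^ (d - (i:ℕ)) := by
          rw [← pow_add]; congr 1; omega
        rw [div_pow, hsplit]
        field_simp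
      rcases mul_eq_zero.mp key with h | h
      · exact absurd h (pow_ne_zero _ hr)
      · exact h
    have hzero : g = 0 := by
      by_cases hall : ∀ r, t r ≠ 0
      · refine Polynomial.eq_zero_of_natDegree_lt_card_of_eval_eq_zero g
          (f := fun r => s r / t r) ?_ (fun r => heval r (hall r)) ?_
        · intro r r' h
          by_contra hne
          refine hnp r r' hne ?_
          rw [div_eq_div_iff (hall r) (hall r')] at h
          exact h
        · simpa using Nat.lt_succ_of_le hdeg
      · push_neg at hall
        obtain ⟨r₀, hr₀⟩ := hall
        have hs₀ : s r₀ ≠ 0 := by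
          intro h0
          haveI : Nontrivial (Fin (d+1)) := ⟨⟨0, ⟨1, by omega⟩, by simp [Fin.ext_iff]⟩⟩
          obtain ⟨r₁, hne⟩ := exists_ne r₀
          exact hnp r₁ r₀ hne (by rw [hr₀, h0]; ring)
        have huniq : ∀ r, r ≠ r₀ → t r ≠ 0 := by
          intro r hr h0
          exact hnp r r₀ hr (by rw [hr₀, h0]; ring)
        have hlast : a (Fin.last d) = 0 := by
          have h0 := ha' r₀
          rw [Finset.sum_eq_single (Fin.last d)] at h0
          · have h1 : t r₀ ^ (d - d) = 1 := by simp
            rw [Fin.val_last, h1, mul_one] at h0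
            exact (mul_eq_zero.mp h0).resolve_right (pow_ne_zero _ hs₀)
          · intro i _ hne
            have h2 : (i:ℕ) ≠ d := fun hc => hne (Fin.ext (by simp [hc]))
            have h1 := i.isLt
            rw [hr₀, zero_pow (by omega : d - (i:ℕ) ≠ 0)]
            ring
          · simp
        have hdeg' : g.natDegree < d := by
          have hle : g.natDegree ≤ d - 1 := by
            rw [Polynomial.natDegree_le_iff_coeff_eq_zero]
            intro N hN
            rcases lt_or_ge N (d+1) with h | h
            · have hNd : (⟨N, by omega⟩ : Fin (d+1)) = Fin.last d := Fin.ext (by simp; omega)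
              rw [hcoeff, dif_pos (by omega : N < d + 1), hNd]
              exact hlast
            · rw [hcoeff, dif_neg (by omega)]
          omega
        refine Polynomial.eq_zero_of_natDegree_lt_card_of_eval_eq_zero g
          (f := fun r : {r : Fin (d+1) // r ≠ r₀} => s r.1 / t r.1) ?_
          (fun r => heval r.1 (huniq r.1 r.2)) ?_
        · intro r r' h
          have htr := huniq r.1 r.2
          have htr' := huniq r'.1 r'.2
          by_contra hne
          have hne' : r.1 ≠ r'.1 := fun hc => hne (Subtype.ext hc)
          refine hnp r.1 r'.1 hne' ?_
          rw [div_eq_div_iff htr htr'] at h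
          exact h
        · have hcard : Fintype.card {r : Fin (d+1) // r ≠ r₀} = d := by
            simp [Fintype.card_subtype_compl]
          rw [hcard]
          exact hdeg'
    funext i
    have h := hcoeff (i:ℕ)
    rw [hzero, Polynomial.coeff_zero, dif_pos i.isLt] at h
    simpa using h.symm
  have hinj : Function.Injective Mᵀ.mulVec := by
    intro x y hxy
    have h : Mᵀ.mulVec (x - y) = 0 := by
      rw [Matrix.mulVec_sub, hxy, sub_self]
    have := hker _ h
    exact sub_eq_zero.mp this
  have hunit : IsUnit M := by
    rw [← Matrix.isUnit_transpose]
    exact Matrix.mulVec_injective_iff_isUnit.mp hinj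
  obtain ⟨c, hc⟩ := Matrix.mulVec_surjective_iff_isUnit.mpr hunit target
  refine ⟨c, fun i => ?_⟩
  have h := congrFun hc i
  simp only [Matrix.mulVec, dotProduct, hM, Matrix.of_apply] at h
  rw [← h]
  exact Finset.sum_congr rfl fun r _ => by ring

open MvPolynomial in
private lemma pow_comb_mem_span {n : ℕ} {k : Type} [Field k] (d : ℕ) (s t : Fin (d+1) → k)
    (hnp : ∀ r r', r ≠ r' → s r * t r' ≠ s r' * t r)
    (U W : MvPolynomial (Fin n) k) (s' t' : k) :
    (C s' * U + C t' * W) ^ d ∈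
      Submodule.span k (Set.range fun r => (C (s r) * U + C (t r) * W) ^ d) := by
  rcases Nat.eq_zero_or_pos d with rfl | hd
  · have h1 : (1 : MvPolynomial (Fin n) k) ∈
        Set.range fun r : Fin 1 => (C (s r) * U + C (t r) * W) ^ 0 := ⟨0, by simp⟩
    simpa using Submodule.subset_span h1
  · obtain ⟨c, hc⟩ := vanderSolve d hd s t hnp (fun i => s' ^ (i:ℕ) * t' ^ (d - (i:ℕ)))
    have key : ∀ α β : k, (C α * U + C β * W) ^ d
        = ∑ i ∈ Finset.range (d+1),
            (α ^ i * β ^ (d - i)) • (U ^ i * W ^ (d - i) * (d.choose i : MvPolynomial (Fin n) k)) := by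
      intro α β
      rw [add_pow]
      refine Finset.sum_congr rfl fun i hi => ?_
      rw [mul_pow, mul_pow, ← map_pow C α, ← map_pow C β, smul_eq_C_mul, map_mul]
      ring
    have main : ∑ r, c r • (C (s r) * U + C (t r) * W) ^ d = (C s' * U + C t' * W) ^ d := by
      calc ∑ r, c r • (C (s r) * U + C (t r) * W) ^ d
          = ∑ r, ∑ i ∈ Finset.range (d+1),
              (c r * (s r ^ i * t r ^ (d - i))) •
                (U ^ i * W ^ (d - i) * (d.choose i : MvPolynomial (Fin n) k)) := by
            refine Finset.sum_congr rfl fun r _ => ?_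
            rw [key (s r) (t r), Finset.smul_sum]
            exact Finset.sum_congr rfl fun i _ => smul_smul _ _ _
        _ = ∑ i ∈ Finset.range (d+1), ∑ r,
              (c r * (s r ^ i * t r ^ (d - i))) •
                (U ^ i * W ^ (d - i) * (d.choose i : MvPolynomial (Fin n) k)) :=
            Finset.sum_comm
        _ = ∑ i ∈ Finset.range (d+1),
              (s' ^ i * t' ^ (d - i)) •
                (U ^ i * W ^ (d - i) * (d.choose i : MvPolynomial (Fin n) k)) := by
            refine Finset.sum_congr rfl fun i hi => ?_
            rw [← Finset.sum_smul]
            congr 1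
            exact hc ⟨i, Finset.mem_range.mp hi⟩
        _ = (C s' * U + C t' * W) ^ d := (key s' t').symm
    rw [← main]
    exact Submodule.sum_mem _ fun r _ => Submodule.smul_mem _ _ (Submodule.subset_span ⟨r, rfl⟩)

open MvPolynomial in
private lemma dualForm_comb {n : ℕ} (k : Type) [Field k] (s t : k) (u w : Fin n → k) :
    dualForm k (s • u + t • w) = C s * dualForm k u + C t * dualForm k w := by
  unfold dualForm
  rw [Finset.mul_sum, Finset.mul_sum, ← Finset.sum_add_distrib]
  refine Finset.sum_congr rfl fun i _ => ?_
  simp only [Pi.add_apply, Pi.smul_apply, smul_eq_mul, map_add, map_mul]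
  ring

open MvPolynomial in
private lemma dualpow_mem_span_of_line {k : Type} [Field k] {n : ℕ} (W : Submodule k (Fin n → k))
    (hW : Module.finrank k W = 2) {d : ℕ} (v : Fin (d+1) → (Fin n → k))
    (hv : ∀ r, v r ∈ W)
    (hprop : ∀ r r', r ≠ r' → ∀ c : k, v r ≠ c • v r')
    (x : Fin n → k) (hx : x ∈ W) :
    dualForm k x ^ d ∈ Submodule.span k (Set.range fun r => dualForm k (v r) ^ d) := by
  let B := Module.finBasisOfFinrankEq k W hW
  set u : Fin n → k := ↑(B 0) with hu
  set w : Fin n → k := ↑(B 1) with hw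
  have hdecomp : ∀ y : W, (y : Fin n → k) = (B.repr y 0) • u + (B.repr y 1) • w := by
    intro y
    have h := congrArg (Subtype.val) (B.sum_repr y)
    simp only [Fin.sum_univ_two] at h
    rw [← h]
    simp only [Submodule.coe_add, SetLike.val_smul]
    rfl
  have hdf : ∀ y : W, dualForm k (y : Fin n → k)
      = C (B.repr y 0) * dualForm k u + C (B.repr y 1) * dualForm k w := by
    intro y
    rw [hdecomp y, dualForm_comb]
  set s : Fin (d+1) → k := fun r => B.repr ⟨v r, hv r⟩ 0 with hs
  set t : Fin (d+1) → k := fun r => B.repr ⟨v r, hv r⟩ 1 with ht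
  have hnp : ∀ r r', r ≠ r' → s r * t r' ≠ s r' * t r := by
    intro r r' hne heq
    have hvr : v r ≠ 0 := by
      intro h0
      exact hprop r r' hne 0 (by rw [h0, zero_smul])
    have hvr' : v r' ≠ 0 := by
      intro h0
      exact hprop r' r (Ne.symm hne) 0 (by rw [h0, zero_smul])
    have hdr : v r = s r • u + t r • w := hdecomp ⟨v r, hv r⟩
    have hdr' : v r' = s r' • u + t r' • w := hdecomp ⟨v r', hv r'⟩
    have hne0 : s r' ≠ 0 ∨ t r' ≠ 0 := by
      by_contra h
      push_neg at h
      apply hvr'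
      rw [hdr', h.1, h.2, zero_smul, zero_smul, add_zero]
    rcases hne0 with hs0 | ht0
    · refine hprop r r' hne (s r / s r') ?_
      rw [hdr, hdr', smul_add, smul_smul, smul_smul]
      have h1 : s r / s r' * s r' = s r := div_mul_cancel₀ _ hs0
      have h2 : s r / s r' * t r' = t r := by
        rw [div_mul_eq_mul_div, heq]
        exact mul_div_cancel_left₀ _ hs0
      rw [h1, h2]
    · refine hprop r r' hne (t r / t r') ?_
      rw [hdr, hdr', smul_add, smul_smul, smul_smul]
      have h1 : t r / t r' * t r' = t r := div_mul_cancel₀ _ ht0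
      have h2 : t r / t r' * s r' = s r := by
        rw [div_mul_eq_mul_div, mul_comm (t r) (s r'), ← heq]
        exact mul_div_cancel_right₀ _ ht0
      rw [h1, h2]
  have hx' : dualForm k x = C (B.repr ⟨x, hx⟩ 0) * dualForm k u + C (B.repr ⟨x, hx⟩ 1) * dualForm k w :=
    hdf ⟨x, hx⟩
  have hfun : (fun r => dualForm k (v r) ^ d)
      = fun r => (C (s r) * dualForm k u + C (t r) * dualForm k w) ^ d := by
    funext r
    rw [hs, ht]
    exact congrArg (· ^ d) (hdf ⟨v r, hv r⟩)
  rw [hx', hfun]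
  exact pow_comb_mem_span d s t hnp (dualForm k u) (dualForm k w) _ _

/-- Corollary 2.4: for an `a×b` grid with `a ≤ b`:
(a) if `a-1 ≤ d ≤ b-1`, then for every `a×(d+1)` subgrid `Y` one has
`Λ_{X,d} = (ℓ_{i,j}^d : P_{i,j} ∈ Y)`;
(b) if `d ≤ a-1`, then for every `(d+1)×(d+1)` subgrid `Y` one has
`Λ_{X,d} = (ℓ_{i,j}^d : P_{i,j} ∈ Y)`. -/
theorem subgrid_powers_ideal_eq (k : Type) [Field k] [CharZero k] [IsAlgClosed k]
    (a b : ℕ) (hab : a ≤ b) (G : Grid k a b) (d : ℕ) (hd : 1 ≤ d) :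
    ((a - 1 ≤ d ∧ d ≤ b - 1) →
      ∀ τ : Fin (d + 1) ↪ Fin b,
        powersIdeal k G.pts d
          = Ideal.span (Set.range
              fun p : Fin a × Fin (d + 1) => dualForm k (G.P p.1 (τ p.2)) ^ d))
    ∧ (d ≤ a - 1 →
      ∀ (σ : Fin (d + 1) ↪ Fin a) (τ : Fin (d + 1) ↪ Fin b),
        powersIdeal k G.pts d
          = Ideal.span (Set.range
              fun p : Fin (d + 1) × Fin (d + 1) => dualForm k (G.P (σ p.1) (τ p.2)) ^ d)) := by
  classical
  have hprop_row : ∀ (i : Fin a) (j j' : Fin b), j ≠ j' → ∀ c : k, G.P i j ≠ c • G.P i j' := by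
    intro i j j' hne c heq
    have h1 : G.P i j ∈ G.mu j := (G.P_mem i j).2
    have h2 : G.P i j ∈ G.mu j' := by
      rw [heq]; exact Submodule.smul_mem _ c (G.P_mem i j').2
    have h3 : G.P i j ∈ G.mu j ⊓ G.mu j' := ⟨h1, h2⟩
    rw [G.mu_disj j j' hne] at h3
    exact G.P_ne i j (by simpa using h3)
  have hprop_col : ∀ (j : Fin b) (i i' : Fin a), i ≠ i' → ∀ c : k, G.P i j ≠ c • G.P i' j := by
    intro j i i' hne c heq
    have h1 : G.P i j ∈ G.lam i := (G.P_mem i j).1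
    have h2 : G.P i j ∈ G.lam i' := by
      rw [heq]; exact Submodule.smul_mem _ c (G.P_mem i' j).1
    have h3 : G.P i j ∈ G.lam i ⊓ G.lam i' := ⟨h1, h2⟩
    rw [G.lam_disj i i' hne] at h3
    exact G.P_ne i j (by simpa using h3)
  have hrow : ∀ (i : Fin a) (j : Fin b) (τ : Fin (d+1) ↪ Fin b),
      dualForm k (G.P i j) ^ d
        ∈ Submodule.span k (Set.range fun r => dualForm k (G.P i (τ r)) ^ d) :=
    fun i j τ => dualpow_mem_span_of_line (G.lam i) (G.lam_rank i)
      (fun r => G.P i (τ r)) (fun r => (G.P_mem i (τ r)).1)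
      (fun r r' hne c => hprop_row i (τ r) (τ r') (fun h => hne (τ.injective h)) c)
      (G.P i j) (G.P_mem i j).1
  have hcol : ∀ (j : Fin b) (i : Fin a) (σ : Fin (d+1) ↪ Fin a),
      dualForm k (G.P i j) ^ d
        ∈ Submodule.span k (Set.range fun r => dualForm k (G.P (σ r) j) ^ d) :=
    fun j i σ => dualpow_mem_span_of_line (G.mu j) (G.mu_rank j)
      (fun r => G.P (σ r) j) (fun r => (G.P_mem (σ r) j).2)
      (fun r r' hne c => hprop_col j (σ r) (σ r') (fun h => hne (σ.injective h)) c)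
      (G.P i j) (G.P_mem i j).2
  constructor
  · intro _ τ
    apply le_antisymm
    · rw [powersIdeal, Ideal.span_le]
      rintro y ⟨vv, hvv, rfl⟩
      obtain ⟨⟨i, j⟩, rfl⟩ := hvv
      have hmem := hrow i j τ
      have hle : Submodule.span k (Set.range fun r => dualForm k (G.P i (τ r)) ^ d)
          ≤ Submodule.restrictScalars k (Ideal.span (Set.range
              fun p : Fin a × Fin (d + 1) => dualForm k (G.P p.1 (τ p.2)) ^ d)) := by
        rw [Submodule.span_le]
        rintro z ⟨r, rfl⟩
        exact Ideal.subset_span ⟨(i, r), rfl⟩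
      exact hle hmem
    · rw [Ideal.span_le]
      rintro y ⟨⟨i, r⟩, rfl⟩
      exact Ideal.subset_span ⟨G.P i (τ r), ⟨(i, τ r), rfl⟩, rfl⟩
  · intro _ σ τ
    apply le_antisymm
    · rw [powersIdeal, Ideal.span_le]
      rintro y ⟨vv, hvv, rfl⟩
      obtain ⟨⟨i, j⟩, rfl⟩ := hvv
      have hmem := hcol j i σ
      have hle : Submodule.span k (Set.range fun r => dualForm k (G.P (σ r) j) ^ d)
          ≤ Submodule.restrictScalars k (Ideal.span (Set.range
              fun p : Fin (d+1) × Fin (d + 1) => dualForm k (G.P (σ p.1) (τ p.2)) ^ d)) := by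
        rw [Submodule.span_le]
        rintro z ⟨r, rfl⟩
        have hmem2 := hrow (σ r) j τ
        have hle2 : Submodule.span k
              (Set.range fun r' => dualForm k (G.P (σ r) (τ r')) ^ d)
            ≤ Submodule.restrictScalars k (Ideal.span (Set.range
                fun p : Fin (d+1) × Fin (d + 1) => dualForm k (G.P (σ p.1) (τ p.2)) ^ d)) := by
          rw [Submodule.span_le]
          rintro z' ⟨r', rfl⟩
          exact Ideal.subset_span ⟨(r, r'), rfl⟩
        exact hle2 hmem2
      exact hle hmem
    · rw [Ideal.span_le]
      rintro y ⟨⟨r, r'⟩, rfl⟩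
      exact Ideal.subset_span ⟨G.P (σ r) (τ r'), ⟨(σ r, τ r'), rfl⟩, rfl⟩
end

section
/- Let X be an a×b grid in P^3 with b ≥ a ≥ 2, let I = Λ_{X,d} with d ≥ b−1, and write d = (b−1)q + r with q ≥ 1 and 0 ≤ r < b−1. Then for every t with d ≤ t ≤ d+q−1 one has [I]_t = [R]_{t−d}·[I]_d, and in particular dim_k [I]_t = ab·binom(t−d+3, 3). -/
open MvPolynomial in
noncomputable def DOp (k : Type) [Field k] {n : ℕ} (v : Fin n → k) :
    Module.End k (MvPolynomial (Fin n) k) :=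
  ∑ m, v m • (pderiv m).toLinearMap

def dotk {n : ℕ} (k : Type) [Field k] (v w : Fin n → k) : k := ∑ m, v m * w m

namespace GeprociAux
open MvPolynomial
variable {k : Type} [Field k] {n : ℕ}

lemma DOp_apply (v : Fin n → k) (f : MvPolynomial (Fin n) k) :
    DOp k v f = ∑ m, v m • pderiv m f := by
  simp [DOp, LinearMap.sum_apply, LinearMap.smul_apply]

lemma DOp_C (v : Fin n → k) (c : k) : DOp k v (C c) = 0 := by
  simp [DOp_apply, pderiv_C]

lemma DOp_X (v : Fin n → k) (j : Fin n) : DOp k v (X j) = C (v j) := by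
  rw [DOp_apply, Finset.sum_eq_single j]
  · rw [pderiv_X_self, smul_eq_C_mul, mul_one]
  · intro m _ hm
    rw [pderiv_X_of_ne (Ne.symm hm), smul_zero]
  · simp

lemma DOp_mul (v : Fin n → k) (f g : MvPolynomial (Fin n) k) :
    DOp k v (f * g) = DOp k v f * g + f * DOp k v g := by
  simp only [DOp_apply, pderiv_mul, smul_add, Finset.sum_add_distrib,
    smul_mul_assoc, mul_smul_comm, Finset.sum_mul, Finset.mul_sum]

lemma DOp_dualForm (v w : Fin n → k) : DOp k v (dualForm k w) = C (dotk k w v) := by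
  rw [dualForm, map_sum, dotk, map_sum]
  apply Finset.sum_congr rfl
  intro i _
  rw [← smul_eq_C_mul, map_smul, DOp_X, smul_eq_C_mul, ← map_mul]

lemma eval_dualForm (w v : Fin n → k) : eval v (dualForm k w) = dotk k w v := by
  simp [dualForm, dotk]

lemma dualForm_isHomogeneous (w : Fin n → k) : (dualForm k w).IsHomogeneous 1 := by
  apply IsHomogeneous.sum
  intro i _
  exact isHomogeneous_C_mul_X (w i) i

lemma coeff_pderiv (i : Fin n) (h : MvPolynomial (Fin n) k) (α : Fin n →₀ ℕ) :
    coeff α (pderiv i h) = ((α i : k) + 1) * coeff (α + Finsupp.single i 1) h := by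
  induction h using MvPolynomial.induction_on' with
  | monomial u a =>
    rw [pderiv_monomial, coeff_monomial, coeff_monomial]
    split_ifs with hA hB hB
    · have h2 : u i = α i + 1 := by rw [hB]; simp
      rw [h2]; push_cast; ring
    · have h3 : u i = 0 := by
        by_contra h3
        apply hB
        ext j
        have h4 : u j - Finsupp.single i 1 j = α j := by
          rw [← Finsupp.tsub_apply, hA]
        rw [Finsupp.add_apply]
        rw [Finsupp.single_apply] at h4 ⊢
        by_cases hj : i = j
        · subst hj; rw [if_pos rfl] at h4 ⊢; omega
        · rw [if_neg hj] at h4 ⊢; omega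
      rw [h3]; push_cast; ring
    · exfalso; apply hA
      subst hB
      ext j
      rw [Finsupp.tsub_apply, Finsupp.add_apply]
      omega
    · rw [mul_zero]
  | add p q hp hq =>
    simp only [map_add, coeff_add, hp, hq, mul_add]

lemma isHomog_iff {f : MvPolynomial (Fin n) k} {N : ℕ} :
    f.IsHomogeneous N ↔ ∀ d : Fin n →₀ ℕ, coeff d f ≠ 0 → Finsupp.degree d = N := by
  constructor
  · intro hf d hd
    rw [Finsupp.degree_eq_weight_one]
    exact hf hd
  · intro hf d hd
    have h := hf d hd
    rw [Finsupp.degree_eq_weight_one] at h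
    exact h

lemma degree_eq_sum_univ (d : Fin n →₀ ℕ) : Finsupp.degree d = ∑ i, d i := by
  rw [Finsupp.degree]
  exact Finset.sum_subset (Finset.subset_univ _)
    (fun i _ hi => Finsupp.notMem_support_iff.mp hi)

lemma degree_add (x y : Fin n →₀ ℕ) :
    Finsupp.degree (x + y) = Finsupp.degree x + Finsupp.degree y := by
  simp [degree_eq_sum_univ, Finsupp.add_apply, Finset.sum_add_distrib]

lemma degree_single (i : Fin n) : Finsupp.degree (Finsupp.single i 1) = 1 := by
  rw [degree_eq_sum_univ]
  simp [Finsupp.single_apply]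

lemma isHomogeneous_pderiv [CharZero k] {f : MvPolynomial (Fin n) k} {N : ℕ}
    (hf : f.IsHomogeneous N) (i : Fin n) : (pderiv i f).IsHomogeneous (N - 1) := by
  rw [isHomog_iff] at hf ⊢
  intro d hd
  rw [coeff_pderiv] at hd
  have h1 : coeff (d + Finsupp.single i 1) f ≠ 0 := by
    intro h; rw [h, mul_zero] at hd; exact hd rfl
  have h2 := hf _ h1
  rw [degree_add, degree_single] at h2
  omega

lemma isHomogeneous_DOp [CharZero k] {f : MvPolynomial (Fin n) k} {N : ℕ}
    (hf : f.IsHomogeneous N) (v : Fin n → k) : (DOp k v f).IsHomogeneous (N - 1) := by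
  rw [DOp_apply, ← mem_homogeneousSubmodule]
  apply Submodule.sum_mem
  intro m _
  exact Submodule.smul_mem _ _ (isHomogeneous_pderiv hf m)

lemma DOp_pow_homog [CharZero k] {f : MvPolynomial (Fin n) k} {N : ℕ}
    (hf : f.IsHomogeneous N) (v : Fin n → k) (l : ℕ) :
    (((DOp k v) ^ l) f).IsHomogeneous (N - l) := by
  induction l generalizing f N with
  | zero => simpa using hf
  | succ l ih =>
    rw [pow_succ, Module.End.mul_apply]
    have := ih (isHomogeneous_DOp hf v)
    rwa [show N - 1 - l = N - (l+1) by omega] at this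

lemma DOp_pow_zero_of_gt [CharZero k] {f : MvPolynomial (Fin n) k} {N : ℕ}
    (hf : f.IsHomogeneous N) (v : Fin n → k) {l : ℕ} (hl : N < l) :
    ((DOp k v) ^ l) f = 0 := by
  induction N generalizing f l with
  | zero =>
    have hD : DOp k v f = 0 := by
      rw [DOp_apply]
      apply Finset.sum_eq_zero
      intro m _
      rw [show pderiv m f = 0 from ?_, smul_zero]
      ext α
      rw [coeff_pderiv, coeff_zero]
      have : coeff (α + Finsupp.single m 1) f = 0 := by
        by_contra hc
        have := (isHomog_iff.mp hf) _ hc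
        rw [degree_add, degree_single] at this
        omega
      rw [this, mul_zero]
    obtain ⟨l', rfl⟩ : ∃ l', l = l' + 1 := ⟨l - 1, by omega⟩
    rw [pow_succ, Module.End.mul_apply, hD, map_zero]
  | succ N ih =>
    obtain ⟨l', rfl⟩ : ∃ l', l = l' + 1 := ⟨l - 1, by omega⟩
    rw [pow_succ, Module.End.mul_apply]
    have hDf : (DOp k v f).IsHomogeneous N := by
      simpa using isHomogeneous_DOp hf v
    exact ih hDf (by omega)

lemma homog_zero_eq_C {f : MvPolynomial (Fin n) k} (hf : f.IsHomogeneous 0) :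
    f = C (coeff 0 f) := by
  ext β
  rw [coeff_C]
  by_cases hb : 0 = β
  · rw [if_pos hb, ← hb]
  · rw [if_neg hb]
    by_contra hc
    have := (isHomog_iff.mp hf) _ hc
    rw [Finsupp.degree_eq_zero_iff] at this
    exact hb this.symm

lemma euler_eval {f : MvPolynomial (Fin n) k} {N : ℕ}
    (hf : f.IsHomogeneous N) (v : Fin n → k) :
    eval v (DOp k v f) = (N : k) * eval v f := by
  have mono : ∀ (d : Fin n →₀ ℕ) (c : k),
      eval v (DOp k v (monomial d c)) = ((Finsupp.degree d : ℕ) : k) * eval v (monomial d c) := by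
    intro d c
    rw [DOp_apply, map_sum]
    have term2 : ∀ m : Fin n, eval v (v m • pderiv m (monomial d c))
        = (d m : k) * eval v (monomial d c) := by
      intro m
      rw [pderiv_monomial, smul_eq_C_mul, map_mul, eval_C, eval_monomial, eval_monomial]
      rcases Nat.eq_zero_or_pos (d m) with hm | hm
      · rw [hm]; push_cast; ring
      · have hd : d = (d - Finsupp.single m 1) + Finsupp.single m 1 := by
          ext j
          rw [Finsupp.add_apply, Finsupp.tsub_apply, Finsupp.single_apply]
          by_cases hj : m = j
          · subst hj; rw [if_pos rfl]; omega
          · rw [if_neg hj]; omega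
        have hsplit : d.prod (fun i e => v i ^ e)
            = (d - Finsupp.single m 1).prod (fun i e => v i ^ e) * v m := by
          conv_lhs => rw [hd]
          rw [Finsupp.prod_add_index' (fun a => pow_zero (v a))
            (fun a b1 b2 => pow_add (v a) b1 b2)]
          rw [Finsupp.prod_single_index (h := fun i e => v i ^ e) (pow_zero (v m)), pow_one]
        rw [hsplit]
        push_cast
        ring
    rw [Finset.sum_congr rfl (fun m _ => term2 m), ← Finset.sum_mul, degree_eq_sum_univ]
    push_cast
    ring
  conv_lhs => rw [← support_sum_monomial_coeff f]
  rw [map_sum, map_sum]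
  have hterm : ∀ d ∈ f.support, eval v (DOp k v (monomial d (coeff d f)))
      = (N : k) * eval v (monomial d (coeff d f)) := by
    intro d hd
    rw [mono d (coeff d f), (isHomog_iff.mp hf) d (mem_support_iff.mp hd)]
  rw [Finset.sum_congr rfl hterm, ← Finset.mul_sum, ← map_sum, support_sum_monomial_coeff f]

lemma DOp_pow_of_homog [CharZero k] {f : MvPolynomial (Fin n) k} {N : ℕ}
    (hf : f.IsHomogeneous N) (v : Fin n → k) :
    ((DOp k v) ^ N) f = C ((N.factorial : k) * eval v f) := by
  induction N generalizing f with
  | zero =>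
    rw [pow_zero, Module.End.one_apply, homog_zero_eq_C hf]
    simp
  | succ N ih =>
    rw [pow_succ, Module.End.mul_apply]
    have hDf : (DOp k v f).IsHomogeneous N := by
      simpa using isHomogeneous_DOp hf v
    rw [ih hDf, euler_eval hf v, Nat.factorial_succ]
    push_cast
    ring_nf

lemma DOp_killed_pow {v : Fin n → k} {T : MvPolynomial (Fin n) k}
    (hT : DOp k v T = 0) (c : ℕ) : DOp k v (T ^ c) = 0 := by
  induction c with
  | zero => simpa using DOp_C v 1
  | succ c ih => rw [pow_succ, DOp_mul, hT, ih, zero_mul, mul_zero, add_zero]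

lemma DOp_pow_mul_killed {v : Fin n → k} {T F : MvPolynomial (Fin n) k}
    (hT : DOp k v T = 0) (c N : ℕ) :
    ((DOp k v) ^ N) (T ^ c * F) = T ^ c * ((DOp k v) ^ N) F := by
  induction N generalizing F with
  | zero => simp
  | succ N ih =>
    rw [pow_succ', Module.End.mul_apply, Module.End.mul_apply, ih, DOp_mul,
      DOp_killed_pow hT, zero_mul, zero_add]

lemma pascal_sum {M : Type} [AddCommMonoid M] (N : ℕ) (A : ℕ → M) :
    (∑ j ∈ Finset.range (N+1), (N.choose j) • A (j+1))
      + (∑ j ∈ Finset.range (N+1), (N.choose j) • A j)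
    = ∑ j ∈ Finset.range (N+2), ((N+1).choose j) • A j := by
  rw [Finset.sum_range_succ' (fun j => ((N+1).choose j) • A j) (N+1)]
  have hsplit : ∀ j ∈ Finset.range (N+1), ((N+1).choose (j+1)) • A (j+1)
      = (N.choose j) • A (j+1) + (N.choose (j+1)) • A (j+1) := by
    intro j _
    rw [← add_smul, ← Nat.choose_succ_succ]
  rw [Finset.sum_congr rfl hsplit, Finset.sum_add_distrib]
  have h2 : (∑ j ∈ Finset.range (N+1), (N.choose j) • A j)
      = (∑ j ∈ Finset.range (N+1), (N.choose (j+1)) • A (j+1)) + ((N+1).choose 0) • A 0 := by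
    have e3 := Finset.sum_range_succ' (fun j => (N.choose j) • A j) (N+1)
    rw [Finset.sum_range_succ (fun j => (N.choose j) • A j) (N+1),
      Nat.choose_succ_self, zero_smul, add_zero] at e3
    rw [e3]
    norm_num
  rw [h2]
  abel

lemma iterLeibniz (v : Fin n → k) (N : ℕ) (f g : MvPolynomial (Fin n) k) :
    ((DOp k v) ^ N) (f * g) = ∑ j ∈ Finset.range (N + 1),
      (N.choose j) • (((DOp k v) ^ j) f * ((DOp k v) ^ (N - j)) g) := by
  induction N with
  | zero => simp
  | succ N ih =>
    rw [pow_succ', Module.End.mul_apply, ih, map_sum]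
    have step : ∀ j ∈ Finset.range (N+1),
        DOp k v ((N.choose j) • (((DOp k v) ^ j) f * ((DOp k v) ^ (N - j)) g))
        = (N.choose j) • (((DOp k v) ^ (j+1)) f * ((DOp k v) ^ ((N+1) - (j+1))) g)
          + (N.choose j) • (((DOp k v) ^ j) f * ((DOp k v) ^ (N + 1 - j)) g) := by
      intro j hj
      rw [Finset.mem_range] at hj
      rw [map_nsmul, DOp_mul, smul_add]
      have e1 : DOp k v (((DOp k v) ^ j) f) = ((DOp k v) ^ (j+1)) f := by
        rw [pow_succ', Module.End.mul_apply]
      have e2 : DOp k v (((DOp k v) ^ (N-j)) g) = ((DOp k v) ^ (N+1-j)) g := by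
        rw [show N+1-j = (N-j)+1 by omega, pow_succ', Module.End.mul_apply]
      rw [e1, e2, show N+1-(j+1) = N - j by omega]
    rw [Finset.sum_congr rfl step, Finset.sum_add_distrib]
    exact pascal_sum N (fun j => ((DOp k v) ^ j) f * ((DOp k v) ^ (N + 1 - j)) g)

end GeprociAux

namespace GeprociAux
open MvPolynomial
variable {k : Type} [Field k] {n : ℕ}

def wf {n : ℕ} (α : Fin n →₀ ℕ) : ℕ := α.prod fun _ e => e.factorial

lemma wf_pos (α : Fin n →₀ ℕ) : 0 < wf α := by
  rw [wf, Finsupp.prod]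
  exact Finset.prod_pos fun _ _ => Nat.factorial_pos _

noncomputable def pairB (f h : MvPolynomial (Fin n) k) : k :=
  ∑ α ∈ f.support, (wf α : k) * coeff α f * coeff α h

lemma pairB_eq_sum (f h : MvPolynomial (Fin n) k) (S : Finset (Fin n →₀ ℕ))
    (hS : f.support ⊆ S) :
    pairB f h = ∑ α ∈ S, (wf α : k) * coeff α f * coeff α h := by
  apply Finset.sum_subset hS
  intro α _ hα
  rw [notMem_support_iff.mp hα, mul_zero, zero_mul]

lemma pairB_add_left (f g h : MvPolynomial (Fin n) k) :
    pairB (f + g) h = pairB f h + pairB g h := by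
  rw [pairB_eq_sum (f+g) h (f.support ∪ g.support) (support_add),
    pairB_eq_sum f h (f.support ∪ g.support) Finset.subset_union_left,
    pairB_eq_sum g h (f.support ∪ g.support) Finset.subset_union_right,
    ← Finset.sum_add_distrib]
  apply Finset.sum_congr rfl
  intro α _
  rw [coeff_add]
  ring

lemma pairB_smul_left (c : k) (f h : MvPolynomial (Fin n) k) :
    pairB (c • f) h = c * pairB f h := by
  rw [pairB_eq_sum (c • f) h f.support (support_smul), pairB, Finset.mul_sum]
  apply Finset.sum_congr rfl
  intro α _
  rw [coeff_smul, smul_eq_mul]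
  ring

lemma pairB_zero_left (h : MvPolynomial (Fin n) k) : pairB 0 h = 0 := by
  simp [pairB]

lemma pairB_zero_right (f : MvPolynomial (Fin n) k) : pairB f 0 = 0 := by
  simp [pairB]

lemma pairB_add_right (f g h : MvPolynomial (Fin n) k) :
    pairB f (g + h) = pairB f g + pairB f h := by
  rw [pairB, pairB, pairB, ← Finset.sum_add_distrib]
  apply Finset.sum_congr rfl
  intro α _
  rw [coeff_add]
  ring

lemma pairB_smul_right (c : k) (f g : MvPolynomial (Fin n) k) :
    pairB f (c • g) = c * pairB f g := by
  rw [pairB, pairB, Finset.mul_sum]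
  apply Finset.sum_congr rfl
  intro α _
  rw [coeff_smul, smul_eq_mul]
  ring

lemma pairB_sum_left {ι : Type} (s : Finset ι) (F : ι → MvPolynomial (Fin n) k)
    (h : MvPolynomial (Fin n) k) :
    pairB (∑ i ∈ s, F i) h = ∑ i ∈ s, pairB (F i) h := by
  classical
  induction s using Finset.induction_on with
  | empty => simp [pairB_zero_left]
  | insert _ _ hx ih =>
    rw [Finset.sum_insert hx, Finset.sum_insert hx, pairB_add_left, ih]

lemma pairB_sum_right {ι : Type} (s : Finset ι) (F : ι → MvPolynomial (Fin n) k)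
    (g : MvPolynomial (Fin n) k) :
    pairB g (∑ i ∈ s, F i) = ∑ i ∈ s, pairB g (F i) := by
  classical
  induction s using Finset.induction_on with
  | empty => simp [pairB_zero_right]
  | insert _ _ hx ih =>
    rw [Finset.sum_insert hx, Finset.sum_insert hx, pairB_add_right, ih]

lemma pairB_monomial_left (α : Fin n →₀ ℕ) (c : k) (h : MvPolynomial (Fin n) k) :
    pairB (monomial α c) h = (wf α : k) * c * coeff α h := by
  classical
  rcases eq_or_ne c 0 with hc | hc
  · subst hc
    rw [map_zero, pairB_zero_left, mul_zero, zero_mul]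
  · rw [pairB, support_monomial, if_neg hc, Finset.sum_singleton, coeff_monomial, if_pos rfl]

lemma pairB_monomial_right (g : MvPolynomial (Fin n) k) (β : Fin n →₀ ℕ) :
    pairB g (monomial β (1 : k)) = (wf β : k) * coeff β g := by
  rw [pairB, Finset.sum_eq_single β]
  · rw [coeff_monomial, if_pos rfl, mul_one]
  · intro a _ ha
    rw [coeff_monomial, if_neg (fun hh => ha hh.symm), mul_zero]
  · intro hβ
    rw [notMem_support_iff.mp hβ, mul_zero, zero_mul]

lemma wf_add_single (α : Fin n →₀ ℕ) (i : Fin n) :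
    wf (α + Finsupp.single i 1) = wf α * (α i + 1) := by
  rw [wf, wf, Finsupp.prod_fintype _ _ (fun _ => Nat.factorial_zero),
    Finsupp.prod_fintype _ _ (fun _ => Nat.factorial_zero),
    ← Finset.mul_prod_erase Finset.univ _ (Finset.mem_univ i),
    ← Finset.mul_prod_erase Finset.univ (fun j => (α j).factorial) (Finset.mem_univ i)]
  have key : ∀ j ∈ Finset.univ.erase i, (α + Finsupp.single i 1 : Fin n →₀ ℕ) j = α j := by
    intro j hj
    rw [Finsupp.add_apply, Finsupp.single_apply,
      if_neg (fun hh => (Finset.mem_erase.mp hj).1 hh.symm), add_zero]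
  rw [Finset.prod_congr rfl (fun j hj => by rw [key j hj]), Finsupp.add_apply,
    Finsupp.single_apply, if_pos rfl, Nat.factorial_succ]
  ring

lemma pairB_mul_X (g h : MvPolynomial (Fin n) k) (i : Fin n) :
    pairB (g * X i) h = pairB g (pderiv i h) := by
  induction g using MvPolynomial.induction_on' with
  | monomial α c =>
    have hX : (monomial α c : MvPolynomial (Fin n) k) * X i
        = monomial (α + Finsupp.single i 1) c := by
      rw [X, monomial_mul, mul_one]
    rw [hX, pairB_monomial_left, pairB_monomial_left, coeff_pderiv, wf_add_single]
    push_cast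
    ring
  | add p q hp hq =>
    rw [add_mul, pairB_add_left, pairB_add_left, hp, hq]

lemma pairB_mul_dualForm (g h : MvPolynomial (Fin n) k) (v : Fin n → k) :
    pairB (g * dualForm k v) h = pairB g (DOp k v h) := by
  rw [dualForm, Finset.mul_sum, pairB_sum_left, DOp_apply, pairB_sum_right]
  apply Finset.sum_congr rfl
  intro i _
  have : g * (C (v i) * X i) = v i • (g * X i) := by
    rw [smul_eq_C_mul]
    ring
  rw [this, pairB_smul_left, pairB_mul_X, ← pairB_smul_right]

lemma pairB_mul_dualForm_pow (g h : MvPolynomial (Fin n) k) (v : Fin n → k) (d : ℕ) :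
    pairB (g * dualForm k v ^ d) h = pairB g (((DOp k v) ^ d) h) := by
  induction d generalizing h with
  | zero => simp
  | succ d ih =>
    rw [pow_succ (dualForm k v), ← mul_assoc, pairB_mul_dualForm, ih,
      pow_succ (DOp k v), Module.End.mul_apply]

lemma eq_zero_of_pairB_zero [CharZero k] {g : MvPolynomial (Fin n) k} {s : ℕ} (hg : g.IsHomogeneous s)
    (hz : ∀ w : MvPolynomial (Fin n) k, w.IsHomogeneous s → pairB g w = 0) : g = 0 := by
  by_contra h0
  obtain ⟨β, hβ⟩ := MvPolynomial.support_nonempty.mpr h0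
  have hdeg : Finsupp.degree β = s := isHomog_iff.mp hg β (mem_support_iff.mp hβ)
  have hw : (monomial β (1 : k)).IsHomogeneous s := isHomogeneous_monomial 1 hdeg
  have hzz := hz _ hw
  rw [pairB_monomial_right] at hzz
  rcases mul_eq_zero.mp hzz with hc | hc
  · exact absurd hc (Nat.cast_ne_zero.mpr (wf_pos β).ne')
  · exact mem_support_iff.mp hβ hc

end GeprociAux

namespace GeprociAux
open MvPolynomial Module
variable {k : Type} [Field k]

lemma dotk_eq_apply {n : ℕ} (φ : (Fin n → k) →ₗ[k] k) (v : Fin n → k) :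
    dotk k (fun m => φ (fun j => if m = j then 1 else 0)) v = φ v := by
  conv_rhs => rw [pi_eq_sum_univ v, map_sum]
  rw [dotk]
  apply Finset.sum_congr rfl
  intro m _
  rw [map_smul, smul_eq_mul, mul_comm]

lemma grid_sep {a b : ℕ} (G : Grid k a b) (i : Fin a) (j : Fin b) :
    ∃ τ : Fin 4 → k,
      (∀ i' j', (i' = i ∨ j' = j) → dotk k τ (G.P i' j') = 0) ∧
      (∀ i' j', i' ≠ i → j' ≠ j → dotk k τ (G.P i' j') ≠ 0) := by
  have hrank4 : finrank k (Fin 4 → k) = 4 := by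
    rw [Module.finrank_pi, Fintype.card_fin]
  have hWrank : finrank k ↥(G.lam i ⊔ G.mu j) = 3 := by
    have h := Submodule.finrank_sup_add_finrank_inf_eq (G.lam i) (G.mu j)
    rw [G.lam_rank i, G.mu_rank j, G.meet_rank i j] at h
    omega
  have hWne : G.lam i ⊔ G.mu j ≠ ⊤ := by
    intro h
    rw [h, finrank_top, hrank4] at hWrank
    omega
  obtain ⟨x, hx⟩ : ∃ x, x ∉ G.lam i ⊔ G.mu j := by
    by_contra hcon
    push_neg at hcon
    exact hWne (Submodule.eq_top_iff'.mpr hcon)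
  obtain ⟨φ, hφx, hφW⟩ :=
    Submodule.exists_dual_map_eq_bot_of_notMem hx inferInstance
  have hle : G.lam i ⊔ G.mu j ≤ LinearMap.ker φ := by
    intro w hw
    rw [LinearMap.mem_ker, ← Submodule.mem_bot (R := k), ← hφW]
    exact Submodule.mem_map_of_mem hw
  have hrange : LinearMap.range φ = ⊤ := by
    rw [Submodule.eq_top_iff']
    intro y
    refine ⟨(y / φ x) • x, ?_⟩
    rw [map_smul, smul_eq_mul, div_mul_cancel₀ y hφx]
  have hkerrank : finrank k ↥(LinearMap.ker φ) = 3 := by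
    have h := LinearMap.finrank_range_add_finrank_ker φ
    rw [hrange, finrank_top, hrank4, Module.finrank_self] at h
    omega
  have hker : G.lam i ⊔ G.mu j = LinearMap.ker φ :=
    Submodule.eq_of_le_of_finrank_le hle (by rw [hkerrank, hWrank])
  refine ⟨fun m => φ (fun j => if m = j then 1 else 0), ?_, ?_⟩
  · intro i' j' hij
    rw [dotk_eq_apply]
    rcases hij with hi | hj
    · subst hi
      have : G.P i' j' ∈ LinearMap.ker φ :=
        hker ▸ le_sup_left (a := G.lam i') (b := G.mu j) ((G.P_mem i' j').1)
      exact this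
    · subst hj
      have : G.P i' j' ∈ LinearMap.ker φ :=
        hker ▸ le_sup_right (a := G.lam i) (b := G.mu j') ((G.P_mem i' j').2)
      exact this
  · intro i' j' hi' hj' hdot
    rw [dotk_eq_apply] at hdot
    have hmem : G.P i' j' ∈ G.lam i ⊔ G.mu j := by
      rw [hker]; exact hdot
    have hlam' : ¬ G.lam i' ≤ G.lam i ⊔ G.mu j := by
      intro hle'
      have hsup : G.lam i ⊔ G.lam i' ≤ G.lam i ⊔ G.mu j := sup_le le_sup_left hle'
      have h4 : finrank k ↥(G.lam i ⊔ G.lam i') = 4 := by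
        have h := Submodule.finrank_sup_add_finrank_inf_eq (G.lam i) (G.lam i')
        rw [G.lam_rank i, G.lam_rank i', G.lam_disj i i' (Ne.symm hi'), finrank_bot] at h
        omega
      have := Submodule.finrank_mono hsup
      rw [h4, hWrank] at this
      omega
    have hlt : (G.lam i ⊔ G.mu j) ⊓ G.lam i' < G.lam i' := by
      apply lt_of_le_of_ne inf_le_right
      intro he
      exact hlam' (by rw [← he]; exact inf_le_left)
    have h1 : finrank k ↥((G.lam i ⊔ G.mu j) ⊓ G.lam i') < 2 := by
      have := Submodule.finrank_lt_finrank_of_lt hlt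
      rwa [G.lam_rank i'] at this
    have hX : G.lam i' ⊓ G.mu j ≤ (G.lam i ⊔ G.mu j) ⊓ G.lam i' :=
      le_inf (le_trans inf_le_right le_sup_right) inf_le_left
    have heq : G.lam i' ⊓ G.mu j = (G.lam i ⊔ G.mu j) ⊓ G.lam i' :=
      Submodule.eq_of_le_of_finrank_le hX (by rw [G.meet_rank i' j]; omega)
    have hPX : G.P i' j' ∈ G.lam i' ⊓ G.mu j := by
      rw [heq]
      exact ⟨hmem, (G.P_mem i' j').1⟩
    have hP0 : G.P i' j' ∈ G.mu j' ⊓ G.mu j := ⟨(G.P_mem i' j').2, hPX.2⟩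
    rw [G.mu_disj j' j hj'] at hP0
    exact G.P_ne i' j' hP0

lemma exists_cover {a b : ℕ} (ha : 2 ≤ a) (hab : a ≤ b) (i0 : Fin a) (j0 : Fin b) :
    ∃ ρ : Fin b → Fin a, (∀ j, ρ j ≠ i0) ∧ ∀ i, i ≠ i0 → ∃ j, j ≠ j0 ∧ ρ j = i := by
  have ha0 : (0 : ℕ) < a := by omega
  have hb0 : (0 : ℕ) < b := by omega
  obtain ⟨ρ', h1, h2⟩ : ∃ ρ' : Fin b → Fin a, (∀ j, ρ' j ≠ ⟨0, ha0⟩) ∧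
      (∀ i : Fin a, i ≠ ⟨0, ha0⟩ → ∃ j : Fin b, j ≠ ⟨0, hb0⟩ ∧ ρ' j = i) := by
    refine ⟨fun j => if h : 0 < (j : ℕ) ∧ (j : ℕ) < a then ⟨(j : ℕ), h.2⟩
      else ⟨1, by omega⟩, ?_, ?_⟩
    · intro j
      beta_reduce
      split_ifs with h
      · intro hh
        simp only [Fin.mk.injEq] at hh
        omega
      · intro hh
        simp only [Fin.mk.injEq] at hh
        omega
    · intro i hi
      have hipos : 0 < (i : ℕ) := by
        rcases Nat.eq_zero_or_pos (i : ℕ) with h | h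
        · exact absurd (Fin.ext h) hi
        · exact h
      refine ⟨⟨(i : ℕ), lt_of_lt_of_le i.2 hab⟩, ?_, ?_⟩
      · intro hh
        simp only [Fin.mk.injEq] at hh
        omega
      · beta_reduce
        rw [dif_pos (show 0 < ((⟨(i : ℕ), lt_of_lt_of_le i.2 hab⟩ : Fin b) : ℕ)
            ∧ ((⟨(i : ℕ), lt_of_lt_of_le i.2 hab⟩ : Fin b) : ℕ) < a from ⟨hipos, i.2⟩)]
  refine ⟨fun j => Equiv.swap ⟨0, ha0⟩ i0 (ρ' (Equiv.swap ⟨0, hb0⟩ j0 j)), ?_, ?_⟩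
  · intro j hj
    beta_reduce at hj
    exact h1 _ ((Equiv.swap ⟨0, ha0⟩ i0).injective
      (hj.trans (Equiv.swap_apply_left ⟨0, ha0⟩ i0).symm))
  · intro i hi
    have hi' : Equiv.swap ⟨0, ha0⟩ i0 i ≠ ⟨0, ha0⟩ := by
      intro h
      apply hi
      have := congrArg (Equiv.swap ⟨0, ha0⟩ i0) h
      rwa [Equiv.swap_apply_self, Equiv.swap_apply_left] at this
    obtain ⟨j, hj, hρj⟩ := h2 _ hi'
    refine ⟨Equiv.swap ⟨0, hb0⟩ j0 j, ?_, ?_⟩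
    · intro h
      apply hj
      have := congrArg (Equiv.swap ⟨0, hb0⟩ j0) h
      rwa [Equiv.swap_apply_self, Equiv.swap_apply_right] at this
    · beta_reduce
      rw [Equiv.swap_apply_self, hρj, Equiv.swap_apply_self]

end GeprociAux

namespace GeprociAux
open MvPolynomial Module
variable (k : Type) [Field k]

def degSubtype (n N : ℕ) : Type := {d : Fin n →₀ ℕ // Finsupp.degree d = N}

noncomputable def degEquivSym (n N : ℕ) : degSubtype n N ≃ Sym (Fin n) N where
  toFun d := ⟨Finsupp.toMultiset d.1, by
    rw [Finsupp.card_toMultiset]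
    exact d.2⟩
  invFun m := ⟨Multiset.toFinsupp m.1, by
    have h1 : Finsupp.degree (Multiset.toFinsupp m.1)
        = Multiset.card (Finsupp.toMultiset (Multiset.toFinsupp m.1)) := by
      rw [Finsupp.card_toMultiset]; rfl
    rw [h1, Multiset.toFinsupp_toMultiset]
    exact m.2⟩
  left_inv d := by
    apply Subtype.ext
    simp [Multiset.toFinsupp_toMultiset]
  right_inv m := by
    apply Subtype.ext
    simp [Finsupp.toMultiset_toFinsupp]

noncomputable instance degFintype (n N : ℕ) : Fintype (degSubtype n N) :=
  Fintype.ofEquiv _ (degEquivSym n N).symm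

lemma degSubtype_card (n N : ℕ) :
    Fintype.card (degSubtype n N) = (n + N - 1).choose N := by
  rw [Fintype.card_congr (degEquivSym n N), Sym.card_sym_eq_choose, Fintype.card_fin]

noncomputable def homogEquiv (n N : ℕ) :
    ↥(homogeneousSubmodule (Fin n) k N) ≃ₗ[k]
      ({d : Fin n →₀ ℕ | Finsupp.degree d = N} →₀ k) :=
  (LinearEquiv.ofEq _ _ (homogeneousSubmodule_eq_finsupp_supported (Fin n) k N)) ≪≫ₗ
    AddMonoidAlgebra.supportedEquivFinsupp _

noncomputable instance homogFintypeSet (n N : ℕ) :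
    Fintype ↥{d : Fin n →₀ ℕ | Finsupp.degree d = N} :=
  degFintype n N

instance homogFinDim (n N : ℕ) :
    FiniteDimensional k ↥(homogeneousSubmodule (Fin n) k N) :=
  Module.Finite.equiv (homogEquiv k n N).symm

lemma finrank_homog (n N : ℕ) :
    finrank k ↥(homogeneousSubmodule (Fin n) k N) = (n + N - 1).choose N := by
  rw [(homogEquiv k n N).finrank_eq, Module.finrank_finsupp_self]
  exact degSubtype_card n N

lemma finrank_homog4 (N : ℕ) :
    finrank k ↥(homogeneousSubmodule (Fin 4) k N) = (N + 3).choose 3 := by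
  rw [finrank_homog]
  have h1 : 4 + N - 1 = N + 3 := by omega
  rw [h1]
  have h2 : N = (N + 3) - 3 := by omega
  conv_lhs => rw [h2]
  exact Nat.choose_symm (by omega)

end GeprociAux


namespace GeprociAux
open MvPolynomial Module
variable {k : Type} [Field k]

lemma step_down [CharZero k] {n : ℕ} {v : Fin n → k} {H g : MvPolynomial (Fin n) k}
    {d s : ℕ} (hH : H.IsHomogeneous d) (hκ : ((DOp k v) ^ d) H ≠ 0)
    (hg : g.IsHomogeneous s) (h0 : ((DOp k v) ^ d) (H * g) = 0)
    {c : ℕ} (h1 : ((DOp k v) ^ (c + 1)) g = 0) : ((DOp k v) ^ c) g = 0 := by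
  have hdc : ((DOp k v) ^ (d + c)) (H * g) = 0 := by
    rw [show d + c = c + d by omega, pow_add, Module.End.mul_apply, h0, map_zero]
  rw [iterLeibniz] at hdc
  have hterm : ∀ j ∈ Finset.range (d + c + 1), j ≠ d →
      ((d + c).choose j) • (((DOp k v) ^ j) H * ((DOp k v) ^ (d + c - j)) g) = 0 := by
    intro j _ hjd
    rcases lt_or_gt_of_ne hjd with hlt | hgt
    · have hz : ((DOp k v) ^ (d + c - j)) g = 0 := by
        rw [show d + c - j = (d + c - j - (c + 1)) + (c + 1) by omega, pow_add,
          Module.End.mul_apply, h1, map_zero]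
      rw [hz, mul_zero, smul_zero]
    · rw [DOp_pow_zero_of_gt hH v hgt, zero_mul, smul_zero]
  rw [Finset.sum_eq_single d (fun j hj hjd => hterm j hj hjd)
    (fun hd => absurd (Finset.mem_range.mpr (by omega)) hd)] at hdc
  rw [show d + c - d = c by omega] at hdc
  have hc0 : (((d + c).choose d : k)) • (((DOp k v) ^ d) H * ((DOp k v) ^ c) g) = 0 := by
    rw [Nat.cast_smul_eq_nsmul]
    exact hdc
  rcases smul_eq_zero.mp hc0 with h | h
  · exfalso
    rw [Nat.cast_eq_zero] at h
    exact Nat.choose_pos (Nat.le_add_right d c) |>.ne' h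
  · rcases mul_eq_zero.mp h with h' | h'
    · exact absurd h' hκ
    · exact h'

lemma inj_of_DH [CharZero k] {n : ℕ} {v : Fin n → k} {H g : MvPolynomial (Fin n) k}
    {d s : ℕ} (hH : H.IsHomogeneous d) (hκ : ((DOp k v) ^ d) H ≠ 0)
    (hg : g.IsHomogeneous s) (h0 : ((DOp k v) ^ d) (H * g) = 0) : g = 0 := by
  have key : ∀ m : ℕ, ((DOp k v) ^ (s + 1 - m)) g = 0 := by
    intro m
    induction m with
    | zero => exact DOp_pow_zero_of_gt hg v (lt_add_one s)
    | succ m ih =>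
      rcases le_or_gt (s + 1) m with hm | hm
      · rw [show s + 1 - (m + 1) = 0 by omega]
        rw [show s + 1 - m = 0 by omega] at ih
        exact ih
      · rw [show s + 1 - m = (s + 1 - (m + 1)) + 1 by omega] at ih
        exact step_down hH hκ hg h0 ih
  have hfin := key (s + 1)
  rwa [Nat.sub_self, pow_zero, Module.End.one_apply] at hfin

lemma core [CharZero k] {a b : ℕ} (G : Grid k a b) (ha : 2 ≤ a) (hab : a ≤ b)
    (d s : ℕ) (hd : (b - 1) * (s + 1) ≤ d)
    (g : Fin a × Fin b → MvPolynomial (Fin 4) k)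
    (hg : ∀ p, (g p).IsHomogeneous s)
    (hrel : ∑ p : Fin a × Fin b, g p * (dualForm k (G.P p.1 p.2)) ^ d = 0) :
    ∀ p0, g p0 = 0 := by
  classical
  rintro ⟨i0, j0⟩
  have hb2 : 2 ≤ b := ha.trans hab
  obtain ⟨ρ, hρ0, hρcov⟩ := exists_cover ha hab i0 j0
  choose τ hτ0 hτ1 using fun j : Fin b => grid_sep G (ρ j) j
  obtain ⟨m0, hm0⟩ : ∃ m, G.P i0 j0 m ≠ 0 := by
    by_contra hc
    push_neg at hc
    exact G.P_ne i0 j0 (funext hc)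
  set cvec : Fin 4 → k := fun m => if m = m0 then 1 else 0 with hcvec
  have hcdot : ∀ w : Fin 4 → k, dotk k cvec w = w m0 := by
    intro w
    rw [dotk, Finset.sum_eq_single m0]
    · simp [hcvec]
    · intro m _ hm
      simp [hcvec, hm]
    · intro hh
      exact absurd (Finset.mem_univ m0) hh
  set e : ℕ := d - (b - 1) * (s + 1) with he
  have heq : (b - 1) * (s + 1) + e = d := by omega
  set H : MvPolynomial (Fin 4) k :=
    (∏ j ∈ Finset.univ.erase j0, (dualForm k (τ j)) ^ (s + 1)) * (dualForm k cvec) ^ e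
    with hH
  have hcard : (Finset.univ.erase j0).card = b - 1 := by
    rw [Finset.card_erase_of_mem (Finset.mem_univ j0), Finset.card_univ, Fintype.card_fin]
  have hprodhom : (∏ j ∈ Finset.univ.erase j0,
      (dualForm k (τ j)) ^ (s + 1)).IsHomogeneous ((b - 1) * (s + 1)) := by
    have h := MvPolynomial.IsHomogeneous.prod (Finset.univ.erase j0)
      (fun j => (dualForm k (τ j)) ^ (s + 1)) (fun _ => s + 1)
      (fun j _ => by simpa using (dualForm_isHomogeneous (τ j)).pow (s + 1))
    rwa [Finset.sum_const, smul_eq_mul, hcard] at h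
  have hHhom : H.IsHomogeneous d := by
    have h := hprodhom.mul ((by simpa using (dualForm_isHomogeneous cvec).pow e) :
      ((dualForm k cvec) ^ e).IsHomogeneous e)
    rwa [heq] at h
  have hkill : ∀ p : Fin a × Fin b, p ≠ (i0, j0) →
      ∀ g' : MvPolynomial (Fin 4) k, g'.IsHomogeneous s →
      ((DOp k (G.P p.1 p.2)) ^ d) (H * g') = 0 := by
    rintro ⟨i1, j1⟩ hne g' hg'
    have hj2 : ∃ j2, j2 ∈ Finset.univ.erase j0 ∧ dotk k (τ j2) (G.P i1 j1) = 0 := by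
      by_cases hj : j1 = j0
      · subst hj
        have hi1 : i1 ≠ i0 := fun h => hne (by rw [h])
        obtain ⟨j2, hj2ne, hρj2⟩ := hρcov i1 hi1
        exact ⟨j2, Finset.mem_erase.mpr ⟨hj2ne, Finset.mem_univ _⟩,
          hτ0 j2 i1 j1 (Or.inl hρj2.symm)⟩
      · exact ⟨j1, Finset.mem_erase.mpr ⟨hj, Finset.mem_univ _⟩,
          hτ0 j1 i1 j1 (Or.inr rfl)⟩
    obtain ⟨j2, hj2mem, hj2dot⟩ := hj2
    have hsplit : H * g' = (dualForm k (τ j2)) ^ (s + 1) *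
        ((∏ j ∈ (Finset.univ.erase j0).erase j2, (dualForm k (τ j)) ^ (s + 1)) *
          (dualForm k cvec) ^ e * g') := by
      rw [hH, ← Finset.mul_prod_erase _ _ hj2mem]
      ring
    have hrest : ((∏ j ∈ (Finset.univ.erase j0).erase j2, (dualForm k (τ j)) ^ (s + 1)) *
        (dualForm k cvec) ^ e * g').IsHomogeneous (d - 1) := by
      have hcard2 : ((Finset.univ.erase j0).erase j2).card = b - 2 := by
        rw [Finset.card_erase_of_mem hj2mem, hcard]
        omega
      have h1 : (∏ j ∈ (Finset.univ.erase j0).erase j2,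
          (dualForm k (τ j)) ^ (s + 1)).IsHomogeneous ((b - 2) * (s + 1)) := by
        have h := MvPolynomial.IsHomogeneous.prod ((Finset.univ.erase j0).erase j2)
          (fun j => (dualForm k (τ j)) ^ (s + 1)) (fun _ => s + 1)
          (fun j _ => by simpa using (dualForm_isHomogeneous (τ j)).pow (s + 1))
        rwa [Finset.sum_const, smul_eq_mul, hcard2] at h
      have h2 := (h1.mul ((by simpa using (dualForm_isHomogeneous cvec).pow e) :
        ((dualForm k cvec) ^ e).IsHomogeneous e)).mul hg'
      have harith : (b - 2) * (s + 1) + e + s = d - 1 := by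
        have hsplit2 : (b - 1) * (s + 1) = (b - 2) * (s + 1) + (s + 1) := by
          rw [show b - 1 = (b - 2) + 1 by omega, add_mul, one_mul]
        omega
      rwa [harith] at h2
    have hdpos : 1 ≤ d := by
      have : 1 ≤ (b - 1) * (s + 1) := by
        have hb1 : 1 ≤ b - 1 := by omega
        exact Nat.one_le_iff_ne_zero.mpr (Nat.mul_ne_zero (by omega) (by omega))
      omega
    rw [hsplit, DOp_pow_mul_killed (by rw [DOp_dualForm, hj2dot, map_zero]),
      DOp_pow_zero_of_gt hrest _ (by omega : d - 1 < d), mul_zero]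
  have hHne : eval (G.P i0 j0) H ≠ 0 := by
    rw [hH, map_mul]
    apply mul_ne_zero
    · rw [map_prod]
      rw [Finset.prod_ne_zero_iff]
      intro j hj
      rw [map_pow]
      apply pow_ne_zero
      rw [eval_dualForm]
      exact hτ1 j i0 j0 (fun h => hρ0 j h.symm)
        (fun h => (Finset.mem_erase.mp hj).1 h.symm)
    · rw [map_pow]
      apply pow_ne_zero
      rw [eval_dualForm, hcdot]
      exact hm0
  have hκ : ((DOp k (G.P i0 j0)) ^ d) H ≠ 0 := by
    rw [DOp_pow_of_homog hHhom]
    intro h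
    rw [show (0 : MvPolynomial (Fin 4) k) = C 0 by rw [map_zero]] at h
    have := C_injective (Fin 4) k h
    rcases mul_eq_zero.mp this with h' | h'
    · exact Nat.cast_ne_zero.mpr (Nat.factorial_pos d).ne' h'
    · exact hHne h'
  -- the multiplication-then-differentiate endomorphism of R_s
  set Rs := homogeneousSubmodule (Fin 4) k s with hRs
  have hMun : ∀ x ∈ Rs, (((DOp k (G.P i0 j0)) ^ d).comp
      (LinearMap.mulLeft k H)) x ∈ Rs := by
    intro x hx
    rw [LinearMap.comp_apply, LinearMap.mulLeft_apply, hRs, mem_homogeneousSubmodule]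
    have hhx : (H * x).IsHomogeneous (d + s) := hHhom.mul hx
    have := DOp_pow_homog hhx (G.P i0 j0) d
    rwa [show d + s - d = s by omega] at this
  set Mlin : ↥Rs →ₗ[k] ↥Rs :=
    LinearMap.restrict (((DOp k (G.P i0 j0)) ^ d).comp (LinearMap.mulLeft k H)) hMun
    with hMlin
  have hMinj : Function.Injective Mlin := by
    intro x y hxy
    have hzz : Mlin (x - y) = 0 := by rw [map_sub, hxy, sub_self]
    have hval : ((DOp k (G.P i0 j0)) ^ d) (H * ((x : MvPolynomial (Fin 4) k) - y)) = 0 := by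
      have h2 := congrArg Subtype.val hzz
      rw [hMlin, LinearMap.restrict_coe_apply] at h2
      simpa [LinearMap.comp_apply, LinearMap.mulLeft_apply] using h2
    have hsub : ((x : MvPolynomial (Fin 4) k) - y).IsHomogeneous s := by
      rw [← mem_homogeneousSubmodule]
      exact Submodule.sub_mem _ x.2 y.2
    have := inj_of_DH hHhom hκ hsub hval
    have hxy2 : (x : MvPolynomial (Fin 4) k) = y := by
      have := sub_eq_zero.mp this
      exact this
    exact Subtype.ext hxy2
  have hMsurj : Function.Surjective Mlin := LinearMap.surjective_of_injective hMinj
  have hpair : ∀ w : MvPolynomial (Fin 4) k, w.IsHomogeneous s →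
      pairB (g (i0, j0)) w = 0 := by
    intro w hw
    obtain ⟨g', hg'⟩ := hMsurj ⟨w, hw⟩
    have h0 : pairB (∑ p : Fin a × Fin b, g p * (dualForm k (G.P p.1 p.2)) ^ d)
        (H * (g' : MvPolynomial (Fin 4) k)) = 0 := by
      rw [hrel, pairB_zero_left]
    rw [pairB_sum_left] at h0
    have hterms : ∀ p ∈ (Finset.univ : Finset (Fin a × Fin b)), p ≠ (i0, j0) →
        pairB (g p * (dualForm k (G.P p.1 p.2)) ^ d)
          (H * (g' : MvPolynomial (Fin 4) k)) = 0 := by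
      intro p _ hp
      rw [pairB_mul_dualForm_pow, hkill p hp (g' : MvPolynomial (Fin 4) k)
        (by rw [← mem_homogeneousSubmodule]; exact g'.2), pairB_zero_right]
    rw [Finset.sum_eq_single (i0, j0) hterms
      (fun h => absurd (Finset.mem_univ _) h)] at h0
    rw [pairB_mul_dualForm_pow] at h0
    have hval : ((DOp k (G.P i0 j0)) ^ d) (H * (g' : MvPolynomial (Fin 4) k)) = w := by
      have h2 := congrArg Subtype.val hg'
      rw [hMlin, LinearMap.restrict_coe_apply] at h2
      simpa [LinearMap.comp_apply, LinearMap.mulLeft_apply] using h2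
    rwa [hval] at h0
  exact eq_zero_of_pairB_zero (hg (i0, j0)) hpair

end GeprociAux

namespace GeprociAux
open MvPolynomial Module
variable {k : Type} [Field k]

lemma homogeneousComponent_mul_homog {n : ℕ} (c y : MvPolynomial (Fin n) k) {d s : ℕ}
    (hy : y.IsHomogeneous d) :
    homogeneousComponent (s + d) (c * y) = homogeneousComponent s c * y := by
  classical
  ext α
  rw [coeff_homogeneousComponent, coeff_mul]
  by_cases hα : Finsupp.degree α = s + d
  · rw [if_pos hα, coeff_mul]
    apply Finset.sum_congr rfl
    intro x hx
    rw [Finset.HasAntidiagonal.mem_antidiagonal] at hx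
    rw [coeff_homogeneousComponent]
    by_cases hβ : Finsupp.degree x.1 = s
    · rw [if_pos hβ]
    · rw [if_neg hβ]
      rcases eq_or_ne (coeff x.2 y) 0 with hy2 | hy2
      · rw [hy2, mul_zero, mul_zero]
      · exfalso
        have hdγ : Finsupp.degree x.2 = d := isHomog_iff.mp hy x.2 hy2
        have : Finsupp.degree x.1 + Finsupp.degree x.2 = s + d := by
          rw [← degree_add, hx, hα]
        omega
  · rw [if_neg hα, coeff_mul]
    symm
    apply Finset.sum_eq_zero
    intro x hx
    rw [Finset.HasAntidiagonal.mem_antidiagonal] at hx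
    rw [coeff_homogeneousComponent]
    by_cases hβ : Finsupp.degree x.1 = s
    · rw [if_pos hβ]
      rcases eq_or_ne (coeff x.2 y) 0 with hy2 | hy2
      · rw [hy2, mul_zero]
      · exfalso
        have hdγ : Finsupp.degree x.2 = d := isHomog_iff.mp hy x.2 hy2
        have : Finsupp.degree x.1 + Finsupp.degree x.2 = Finsupp.degree α := by
          rw [← degree_add, hx]
        omega
    · rw [if_neg hβ, zero_mul]

lemma pts_pow_mem {a b : ℕ} (G : Grid k a b) (d : ℕ) (p : Fin a × Fin b) :
    dualForm k (G.P p.1 p.2) ^ d ∈ powersIdeal k G.pts d := by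
  apply Ideal.subset_span
  exact ⟨G.P p.1 p.2, ⟨p, rfl⟩, rfl⟩

lemma comp_decomp {a b : ℕ} (G : Grid k a b) (ha : 2 ≤ a) (hab : a ≤ b)
    (d s : ℕ) (f : MvPolynomial (Fin 4) k)
    (hfI : f ∈ powersIdeal k G.pts d) (hf : f.IsHomogeneous (s + d)) :
    ∃ g : Fin a × Fin b → MvPolynomial (Fin 4) k, (∀ p, (g p).IsHomogeneous s) ∧
      f = ∑ p : Fin a × Fin b, g p * (dualForm k (G.P p.1 p.2)) ^ d := by
  classical
  rw [powersIdeal] at hfI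
  obtain ⟨cc, hsupp, hsum⟩ := Submodule.mem_span_set.mp hfI
  have hchoice : ∀ y ∈ cc.support, ∃ p : Fin a × Fin b,
      dualForm k (G.P p.1 p.2) ^ d = y := by
    intro y hy
    obtain ⟨v, hv, hvy⟩ := hsupp hy
    obtain ⟨p, hp⟩ := hv
    exact ⟨p, by rw [show G.P p.1 p.2 = v from hp]; exact hvy⟩
  have : Nonempty (Fin a × Fin b) := ⟨(⟨0, by omega⟩, ⟨0, by omega⟩)⟩
  choose! F hF using hchoice
  refine ⟨fun p => ∑ y ∈ cc.support.filter (fun y => F y = p),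
    homogeneousComponent s (cc y), ?_, ?_⟩
  · intro p
    rw [← mem_homogeneousSubmodule]
    apply Submodule.sum_mem
    intro y _
    rw [mem_homogeneousSubmodule]
    exact homogeneousComponent_isHomogeneous s (cc y)
  · have hterm : ∀ y ∈ cc.support,
        homogeneousComponent (s + d) (cc y * y) = homogeneousComponent s (cc y) * y := by
      intro y hy
      have hyhom : y.IsHomogeneous d := by
        rw [← hF y hy]
        simpa using (dualForm_isHomogeneous (G.P (F y).1 (F y).2)).pow d
      exact homogeneousComponent_mul_homog _ _ hyhom
    have hf2 : f = ∑ y ∈ cc.support, cc y * y := by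
      rw [← hsum]
      apply Finset.sum_congr rfl
      intro y _
      simp [smul_eq_mul]
    have hmain : f = ∑ y ∈ cc.support, homogeneousComponent s (cc y) * y := by
      calc f = homogeneousComponent (s + d) f := by
            rw [homogeneousComponent_of_mem ((mem_homogeneousSubmodule _ _).mpr hf),
              if_pos rfl]
        _ = homogeneousComponent (s + d) (∑ y ∈ cc.support, cc y * y) := by rw [← hf2]
        _ = ∑ y ∈ cc.support, homogeneousComponent (s + d) (cc y * y) := map_sum _ _ _
        _ = ∑ y ∈ cc.support, homogeneousComponent s (cc y) * y :=
            Finset.sum_congr rfl hterm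
    rw [hmain]
    rw [← Finset.sum_fiberwise_of_maps_to (g := fun y => F y)
      (fun y _ => Finset.mem_univ (F y))
      (f := fun y => homogeneousComponent s (cc y) * y)]
    apply Finset.sum_congr rfl
    intro p _
    rw [Finset.sum_mul]
    apply Finset.sum_congr rfl
    intro y hy
    rw [Finset.mem_filter] at hy
    rw [← hy.2, hF y hy.1]

end GeprociAux

/-- Corollary 4.3(a): for an `a×b` grid (`b ≥ a ≥ 2`), `I = Λ_{X,d}` with `d ≥ b-1`, and
`d = (b-1)q + r` with `q ≥ 1`, `0 ≤ r < b-1`: for every `t` with `d ≤ t ≤ d+q-1` one has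
`[I]_t = [R]_{t-d}·[I]_d` and `dim [I]_t = ab·C(t-d+3,3)`. -/
theorem powers_ideal_low_degree_components (k : Type) [Field k] [CharZero k] [IsAlgClosed k]
    (a b : ℕ) (ha : 2 ≤ a) (hab : a ≤ b) (G : Grid k a b)
    (d q r : ℕ) (hd : b - 1 ≤ d) (hq : 1 ≤ q)
    (hdecomp : d = (b - 1) * q + r) (hr : r < b - 1)
    (t : ℕ) (ht1 : d ≤ t) (ht2 : t ≤ d + q - 1) :
    idealComp k (powersIdeal k G.pts d) t
        = MvPolynomial.homogeneousSubmodule (Fin 4) k (t - d)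
            * idealComp k (powersIdeal k G.pts d) d
    ∧ Module.finrank k (idealComp k (powersIdeal k G.pts d) t)
        = a * b * Nat.choose (t - d + 3) 3 := by
  classical
  open MvPolynomial GeprociAux in
  obtain ⟨s, rfl⟩ : ∃ s, t = d + s := ⟨t - d, by omega⟩
  rw [Nat.add_sub_cancel_left]
  have hb2 : 2 ≤ b := ha.trans hab
  have hsq : s + 1 ≤ q := by omega
  have hcore : (b - 1) * (s + 1) ≤ d :=
    calc (b - 1) * (s + 1) ≤ (b - 1) * q := Nat.mul_le_mul (le_refl (b - 1)) hsq
      _ ≤ (b - 1) * q + r := Nat.le_add_right _ _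
      _ = d := hdecomp.symm
  set I := powersIdeal k G.pts d with hI
  have hmemIC : ∀ (x : MvPolynomial (Fin 4) k) (N : ℕ),
      x ∈ idealComp k I N ↔ x ∈ I ∧ x.IsHomogeneous N := by
    intro x N
    rw [idealComp, Submodule.mem_inf, Submodule.restrictScalars_mem,
      mem_homogeneousSubmodule]
  set Rs := MvPolynomial.homogeneousSubmodule (Fin 4) k s with hRs
  set Ψ : ((Fin a × Fin b) → ↥Rs) →ₗ[k] MvPolynomial (Fin 4) k :=
    ∑ p : Fin a × Fin b, (LinearMap.mulRight k (dualForm k (G.P p.1 p.2) ^ d)).comp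
      ((Rs.subtype).comp (LinearMap.proj p)) with hΨ
  have hΨapp : ∀ gg : (Fin a × Fin b) → ↥Rs,
      Ψ gg = ∑ p : Fin a × Fin b,
        (gg p : MvPolynomial (Fin 4) k) * dualForm k (G.P p.1 p.2) ^ d := by
    intro gg
    rw [hΨ, LinearMap.sum_apply]
    apply Finset.sum_congr rfl
    intro p _
    simp [LinearMap.mulRight_apply, LinearMap.comp_apply]
  have hpowhom : ∀ p : Fin a × Fin b,
      (dualForm k (G.P p.1 p.2) ^ d).IsHomogeneous d := by
    intro p
    simpa using (dualForm_isHomogeneous (G.P p.1 p.2)).pow d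
  have hrange : LinearMap.range Ψ = idealComp k I (d + s) := by
    apply le_antisymm
    · rintro x ⟨gg, rfl⟩
      rw [hΨapp, hmemIC]
      constructor
      · exact Ideal.sum_mem I fun p _ => Ideal.mul_mem_left _ _ (pts_pow_mem G d p)
      · rw [← mem_homogeneousSubmodule]
        apply Submodule.sum_mem
        intro p _
        rw [mem_homogeneousSubmodule, show d + s = s + d by omega]
        exact ((mem_homogeneousSubmodule _ _).mp (gg p).2).mul (hpowhom p)
    · intro f hf
      rw [hmemIC] at hf
      have hfhom' : f.IsHomogeneous (s + d) := by
        rw [show s + d = d + s by omega]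
        exact hf.2
      obtain ⟨g, hg, hfeq⟩ := comp_decomp G ha hab d s f hf.1 hfhom'
      refine ⟨fun p => ⟨g p, (mem_homogeneousSubmodule _ _).mpr (hg p)⟩, ?_⟩
      rw [hΨapp]
      exact hfeq.symm
  have hinj : Function.Injective Ψ := by
    rw [← LinearMap.ker_eq_bot]
    rw [Submodule.eq_bot_iff]
    intro gg hgg
    rw [LinearMap.mem_ker, hΨapp] at hgg
    have hz := core G ha hab d s hcore (fun p => (gg p : MvPolynomial (Fin 4) k))
      (fun p => (mem_homogeneousSubmodule _ _).mp (gg p).2) hgg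
    funext p
    exact Subtype.ext (hz p)
  constructor
  · apply le_antisymm
    · intro f hf
      rw [hmemIC] at hf
      have hfhom' : f.IsHomogeneous (s + d) := by
        rw [show s + d = d + s by omega]
        exact hf.2
      obtain ⟨g, hg, hfeq⟩ := comp_decomp G ha hab d s f hf.1 hfhom'
      rw [hfeq]
      apply Submodule.sum_mem
      intro p _
      refine Submodule.mul_mem_mul ((mem_homogeneousSubmodule _ _).mpr (hg p)) ?_
      rw [hmemIC]
      exact ⟨pts_pow_mem G d p, hpowhom p⟩
    · rw [Submodule.mul_le]
      intro x hx y hy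
      rw [hmemIC] at hy
      rw [hmemIC]
      constructor
      · exact Ideal.mul_mem_left _ _ hy.1
      · have := ((mem_homogeneousSubmodule _ _).mp hx).mul hy.2
        rwa [show s + d = d + s by omega] at this
  · have h1 : Module.finrank k ↥(idealComp k I (d + s))
        = Module.finrank k ↥(LinearMap.range Ψ) := by rw [hrange]
    rw [h1, LinearMap.finrank_range_of_inj hinj, Module.finrank_pi_fintype,
      Finset.sum_const, Finset.card_univ, Fintype.card_prod, Fintype.card_fin,
      Fintype.card_fin, smul_eq_mul]
    rw [hRs, finrank_homog4]
end
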